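/- arXiv:1907.07565 — 12 statements merged into one kernel-verified Lean document; each statement's English description precedes it below -/
import Mathlib

section
/- Consider problem (P2). If (p, ℓ, d) is an optimal solution of (P2) — i.e., it is feasible and its objective value Σ_{i=1}^N τ p_i is at most that of every feasible point — then the N-th energy-causality constraint holds with equality: Σ_{i=1}^N (E_loc(ℓ_i) + E_off(d_i)) = Σ_{i=1}^N τ η h p_i. -/
open Finset

/-- Local-computing energy: `E_loc(x) = ζ C³ x³ / τ²`. -/
noncomputable def Eloc (ζ C τ x : ℝ) : ℝ := ζ * C ^ 3 * x ^ 3 / τ ^ 2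

/-- Offloading energy: `E_off(x) = (τσ²/g)(2^{x/(τB)} − 1)`. -/
noncomputable def Eoff (τ σ2 g B x : ℝ) : ℝ := τ * σ2 / g * ((2 : ℝ) ^ (x / (τ * B)) - 1)

/-- Feasibility for problem (P2): nonnegativity, energy causality, task causality,
task completion. -/
def FeasP2 (N : ℕ) (τ η h g ζ C σ2 B : ℝ) (A p ℓ d : ℕ → ℝ) : Prop :=
  (∀ i ∈ Finset.Icc 1 N, 0 ≤ p i ∧ 0 ≤ ℓ i ∧ 0 ≤ d i) ∧
  (∀ i ∈ Finset.Icc 1 N,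
    ∑ j ∈ Finset.Icc 1 i, (Eloc ζ C τ (ℓ j) + Eoff τ σ2 g B (d j))
      ≤ ∑ j ∈ Finset.Icc 1 i, τ * η * h * p j) ∧
  (∀ i ∈ Finset.Icc 1 (N - 1),
    ∑ j ∈ Finset.Icc 1 i, (ℓ j + d j) ≤ ∑ j ∈ Finset.Icc 1 i, A j) ∧
  ∑ j ∈ Finset.Icc 1 N, (ℓ j + d j) = ∑ j ∈ Finset.Icc 1 N, A j

/-- Telescoping sum over `Icc 1 n`. -/
lemma tele_aux (Q : ℕ → ℝ) (n : ℕ) :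
    ∑ j ∈ Finset.Icc 1 n, (Q j - Q (j - 1)) = Q n - Q 0 := by
  induction n with
  | zero => simp
  | succ n ih =>
    rw [Finset.sum_Icc_succ_top (Nat.one_le_iff_ne_zero.mpr (Nat.succ_ne_zero n)), ih]
    simp only [Nat.add_sub_cancel]
    ring

/-- Lemma 1: at any optimal solution of (P2), the `N`-th energy-causality
constraint is tight. -/
theorem stmt_0
    (N : ℕ) (hN : 0 < N)
    (τ η h g ζ C σ2 B : ℝ)
    (hτ : 0 < τ) (hη : 0 < η) (hh : 0 < h) (hg : 0 < g)
    (hζ : 0 < ζ) (hC : 0 < C) (hσ2 : 0 < σ2) (hB : 0 < B)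
    (A : ℕ → ℝ) (hA : ∀ i ∈ Finset.Icc 1 N, 0 ≤ A i)
    (p ℓ d : ℕ → ℝ)
    (hfeas : FeasP2 N τ η h g ζ C σ2 B A p ℓ d)
    (hopt : ∀ p' ℓ' d' : ℕ → ℝ, FeasP2 N τ η h g ζ C σ2 B A p' ℓ' d' →
      ∑ i ∈ Finset.Icc 1 N, τ * p i ≤ ∑ i ∈ Finset.Icc 1 N, τ * p' i) :
    ∑ i ∈ Finset.Icc 1 N, (Eloc ζ C τ (ℓ i) + Eoff τ σ2 g B (d i))
      = ∑ i ∈ Finset.Icc 1 N, τ * η * h * p i := by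
  obtain ⟨hnn, hen, htc, hcomp⟩ := hfeas
  have hτηh : (0:ℝ) < τ * η * h := by positivity
  -- total energy used
  set c : ℝ := ∑ i ∈ Finset.Icc 1 N, (Eloc ζ C τ (ℓ i) + Eoff τ σ2 g B (d i)) with hc
  -- each energy term is nonnegative
  have hterm : ∀ j ∈ Finset.Icc 1 N, 0 ≤ Eloc ζ C τ (ℓ j) + Eoff τ σ2 g B (d j) := by
    intro j hj
    obtain ⟨-, hℓj, hdj⟩ := hnn j hj
    have h1 : 0 ≤ Eloc ζ C τ (ℓ j) := by
      unfold Eloc; positivity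
    have h2 : 0 ≤ Eoff τ σ2 g B (d j) := by
      unfold Eoff
      have : (1:ℝ) ≤ (2:ℝ) ^ (d j / (τ * B)) :=
        Real.one_le_rpow one_le_two (by positivity)
      have h3 : 0 ≤ (2:ℝ) ^ (d j / (τ * B)) - 1 := by linarith
      positivity
    linarith
  have hc0 : 0 ≤ c := Finset.sum_nonneg hterm
  -- cumulative powers
  set P : ℕ → ℝ := fun i => ∑ j ∈ Finset.Icc 1 i, τ * η * h * p j with hP
  set q : ℕ → ℝ := fun i => min (P i) c with hq
  have hq0 : q 0 = 0 := by
    simp only [hq, hP]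
    simp [min_eq_left hc0]
  set p' : ℕ → ℝ := fun i => (q i - q (i - 1)) / (τ * η * h) with hp'
  -- cumulative sums of the new powers
  have hsum : ∀ i, ∑ j ∈ Finset.Icc 1 i, τ * η * h * p' j = q i := by
    intro i
    have hterm' : ∀ j ∈ Finset.Icc 1 i, τ * η * h * p' j = q j - q (j - 1) := by
      intro j _
      simp only [hp']
      field_simp
    rw [Finset.sum_congr rfl hterm', tele_aux, hq0, sub_zero]
  -- q is monotone at each step
  have hqmono : ∀ i ∈ Finset.Icc 1 N, q (i - 1) ≤ q i := by
    intro i hi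
    have hi1 : 1 ≤ i := (Finset.mem_Icc.mp hi).1
    have hpi : 0 ≤ p i := (hnn i hi).1
    have hPstep : P (i - 1) ≤ P i := by
      have hi' : i = (i - 1) + 1 := by omega
      have hsplit : P i = P (i - 1) + τ * η * h * p i := by
        conv_lhs => rw [hi']
        simp only [hP]
        rw [Finset.sum_Icc_succ_top (by omega), (by omega : i - 1 + 1 = i)]
      have hp2 : 0 ≤ τ * η * h * p i := by positivity
      rw [hsplit]
      linarith
    exact min_le_min hPstep le_rfl
  -- partial energies are at most c
  have hEc : ∀ i ∈ Finset.Icc 1 N,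
      ∑ j ∈ Finset.Icc 1 i, (Eloc ζ C τ (ℓ j) + Eoff τ σ2 g B (d j)) ≤ c := by
    intro i hi
    have hi2 : i ≤ N := (Finset.mem_Icc.mp hi).2
    exact Finset.sum_le_sum_of_subset_of_nonneg
      (Finset.Icc_subset_Icc_right hi2) (fun j hj _ => hterm j hj)
  -- feasibility of the modified point
  have hfeas' : FeasP2 N τ η h g ζ C σ2 B A p' ℓ d := by
    refine ⟨?_, ?_, htc, hcomp⟩
    · intro i hi
      refine ⟨?_, (hnn i hi).2.1, (hnn i hi).2.2⟩
      exact div_nonneg (by linarith [hqmono i hi]) hτηh.le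
    · intro i hi
      rw [hsum i]
      exact le_min (hen i hi) (hEc i hi)
  -- use optimality
  have hle := hopt p' ℓ d hfeas'
  -- multiply by η*h
  have hmul : ∀ f : ℕ → ℝ, (η * h) * ∑ i ∈ Finset.Icc 1 N, τ * f i
      = ∑ i ∈ Finset.Icc 1 N, τ * η * h * f i := by
    intro f
    rw [Finset.mul_sum]
    exact Finset.sum_congr rfl fun i _ => by ring
  have hP_le : P N ≤ c := by
    have h1 : (η * h) * ∑ i ∈ Finset.Icc 1 N, τ * p i
        ≤ (η * h) * ∑ i ∈ Finset.Icc 1 N, τ * p' i :=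
      mul_le_mul_of_nonneg_left hle (by positivity)
    rw [hmul p, hmul p'] at h1
    have h2 : ∑ i ∈ Finset.Icc 1 N, τ * η * h * p' i = q N := hsum N
    have h3 : q N ≤ c := min_le_right _ _
    have h4 : P N = ∑ i ∈ Finset.Icc 1 N, τ * η * h * p i := rfl
    linarith [h1, h2.symm ▸ h3]
  have hc_le : c ≤ P N := hen N (Finset.mem_Icc.mpr ⟨hN, le_rfl⟩)
  have : c = P N := le_antisymm hc_le hP_le
  exact this
end

section
/- The optimal value of problem (P2) equals the optimal value of problem (P2.1). Moreover, if (p, ℓ, d) is an optimal solution of (P2), then (ℓ, d) is an optimal solution of (P2.1). -/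
open Finset

/-- Feasibility for problem (P2.1): nonnegativity, task causality, task completion. -/
def FeasP21 (N : ℕ) (A ℓ d : ℕ → ℝ) : Prop :=
  (∀ i ∈ Finset.Icc 1 N, 0 ≤ ℓ i ∧ 0 ≤ d i) ∧
  (∀ i ∈ Finset.Icc 1 (N - 1),
    ∑ j ∈ Finset.Icc 1 i, (ℓ j + d j) ≤ ∑ j ∈ Finset.Icc 1 i, A j) ∧
  ∑ j ∈ Finset.Icc 1 N, (ℓ j + d j) = ∑ j ∈ Finset.Icc 1 N, A j

lemma Eloc_nonneg' {ζ C τ x : ℝ} (hζ : 0 < ζ) (hC : 0 < C) (hx : 0 ≤ x) :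
    0 ≤ Eloc ζ C τ x := by
  unfold Eloc
  apply div_nonneg _ (sq_nonneg τ)
  exact mul_nonneg (mul_nonneg hζ.le (by positivity)) (pow_nonneg hx 3)

lemma Eoff_nonneg' {τ σ2 g B x : ℝ} (hτ : 0 < τ) (hσ2 : 0 < σ2) (hg : 0 < g)
    (hB : 0 < B) (hx : 0 ≤ x) : 0 ≤ Eoff τ σ2 g B x := by
  unfold Eoff
  apply mul_nonneg (by positivity)
  have : (1:ℝ) ≤ (2:ℝ) ^ (x / (τ * B)) :=
    Real.one_le_rpow (by norm_num) (by positivity)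
  linarith

/-- The optimal value of (P2) equals the optimal value of (P2.1); moreover, the task
allocation of any optimal solution of (P2) is an optimal solution of (P2.1). -/
theorem stmt_1
    (N : ℕ) (hN : 0 < N)
    (τ η h g ζ C σ2 B : ℝ)
    (hτ : 0 < τ) (hη : 0 < η) (hh : 0 < h) (hg : 0 < g)
    (hζ : 0 < ζ) (hC : 0 < C) (hσ2 : 0 < σ2) (hB : 0 < B)
    (A : ℕ → ℝ) (hA : ∀ i ∈ Finset.Icc 1 N, 0 ≤ A i) :
    (sInf {v : ℝ | ∃ p ℓ d : ℕ → ℝ, FeasP2 N τ η h g ζ C σ2 B A p ℓ d ∧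
        v = ∑ i ∈ Finset.Icc 1 N, τ * p i}
      = sInf {v : ℝ | ∃ ℓ d : ℕ → ℝ, FeasP21 N A ℓ d ∧
        v = ∑ i ∈ Finset.Icc 1 N,
              1 / (η * h) * (Eloc ζ C τ (ℓ i) + Eoff τ σ2 g B (d i))}) ∧
    (∀ p ℓ d : ℕ → ℝ, FeasP2 N τ η h g ζ C σ2 B A p ℓ d →
      (∀ p' ℓ' d' : ℕ → ℝ, FeasP2 N τ η h g ζ C σ2 B A p' ℓ' d' →
        ∑ i ∈ Finset.Icc 1 N, τ * p i ≤ ∑ i ∈ Finset.Icc 1 N, τ * p' i) →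
      FeasP21 N A ℓ d ∧
      ∀ ℓ' d' : ℕ → ℝ, FeasP21 N A ℓ' d' →
        ∑ i ∈ Finset.Icc 1 N, 1 / (η * h) * (Eloc ζ C τ (ℓ i) + Eoff τ σ2 g B (d i))
          ≤ ∑ i ∈ Finset.Icc 1 N, 1 / (η * h) * (Eloc ζ C τ (ℓ' i) + Eoff τ σ2 g B (d' i))) := by
  -- helpers
  have hτηh : (0:ℝ) < τ * η * h := by positivity
  have Enn : ∀ ℓ d : ℕ → ℝ, (∀ i ∈ Finset.Icc 1 N, 0 ≤ ℓ i ∧ 0 ≤ d i) →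
      ∀ i ∈ Finset.Icc 1 N, 0 ≤ Eloc ζ C τ (ℓ i) + Eoff τ σ2 g B (d i) := by
    intro ℓ d hnn i hi
    exact add_nonneg (Eloc_nonneg' hζ hC (hnn i hi).1)
      (Eoff_nonneg' hτ hσ2 hg hB (hnn i hi).2)
  -- from P2 feasibility, get P2.1 feasibility and value comparison
  have fwd : ∀ p ℓ d : ℕ → ℝ, FeasP2 N τ η h g ζ C σ2 B A p ℓ d →
      FeasP21 N A ℓ d ∧
      ∑ i ∈ Finset.Icc 1 N, 1 / (η * h) * (Eloc ζ C τ (ℓ i) + Eoff τ σ2 g B (d i))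
        ≤ ∑ i ∈ Finset.Icc 1 N, τ * p i := by
    intro p ℓ d ⟨hnn, hE, hT, hC2⟩
    refine ⟨⟨fun i hi => ⟨(hnn i hi).2.1, (hnn i hi).2.2⟩, hT, hC2⟩, ?_⟩
    have hEN := hE N (Finset.mem_Icc.mpr ⟨hN, le_rfl⟩)
    rw [← Finset.mul_sum]
    have h1 : ∑ j ∈ Finset.Icc 1 N, τ * η * h * p j
        = (η * h) * ∑ i ∈ Finset.Icc 1 N, τ * p i := by
      rw [Finset.mul_sum]; apply Finset.sum_congr rfl; intro j _; ring
    rw [h1] at hEN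
    rw [div_mul_eq_mul_div, one_mul, div_le_iff₀ (by positivity)]
    linarith [hEN]
  -- from P2.1 feasibility, construct P2 feasible point with equal value
  have bwd : ∀ ℓ d : ℕ → ℝ, FeasP21 N A ℓ d →
      ∃ p : ℕ → ℝ, FeasP2 N τ η h g ζ C σ2 B A p ℓ d ∧
        ∑ i ∈ Finset.Icc 1 N, τ * p i
          = ∑ i ∈ Finset.Icc 1 N, 1 / (η * h) * (Eloc ζ C τ (ℓ i) + Eoff τ σ2 g B (d i)) := by
    intro ℓ d ⟨hnn, hT, hC2⟩
    refine ⟨fun j => (Eloc ζ C τ (ℓ j) + Eoff τ σ2 g B (d j)) / (τ * η * h), ?_, ?_⟩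
    · refine ⟨fun i hi => ⟨div_nonneg (Enn ℓ d hnn i hi) hτηh.le, (hnn i hi).1, (hnn i hi).2⟩,
        ?_, hT, hC2⟩
      intro i _
      apply le_of_eq
      apply Finset.sum_congr rfl
      intro j _
      rw [mul_div_cancel₀ _ hτηh.ne']
    · apply Finset.sum_congr rfl
      intro j _
      field_simp
  constructor
  · -- sInf equality
    set S2 := {v : ℝ | ∃ p ℓ d : ℕ → ℝ, FeasP2 N τ η h g ζ C σ2 B A p ℓ d ∧
        v = ∑ i ∈ Finset.Icc 1 N, τ * p i} with hS2
    set S1 := {v : ℝ | ∃ ℓ d : ℕ → ℝ, FeasP21 N A ℓ d ∧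
        v = ∑ i ∈ Finset.Icc 1 N,
              1 / (η * h) * (Eloc ζ C τ (ℓ i) + Eoff τ σ2 g B (d i))} with hS1
    have hsub : S1 ⊆ S2 := by
      rintro v ⟨ℓ, d, hf, rfl⟩
      obtain ⟨p, hp, hv⟩ := bwd ℓ d hf
      exact ⟨p, ℓ, d, hp, hv.symm⟩
    have hne1 : S1.Nonempty := by
      refine ⟨_, A, fun _ => 0, ⟨fun i hi => ⟨hA i hi, le_refl 0⟩, ?_, ?_⟩, rfl⟩
      · intro i _; simp
      · simp
    have hne2 : S2.Nonempty := hne1.mono hsub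
    have hbdd2 : BddBelow S2 := by
      refine ⟨0, ?_⟩
      rintro v ⟨p, ℓ, d, ⟨hnn, _, _, _⟩, rfl⟩
      exact Finset.sum_nonneg fun i hi => mul_nonneg hτ.le (hnn i hi).1
    have hbdd1 : BddBelow S1 := hbdd2.mono hsub
    apply le_antisymm
    · exact csInf_le_csInf hbdd2 hne1 hsub
    · apply le_csInf hne2
      rintro v ⟨p, ℓ, d, hf, rfl⟩
      obtain ⟨hf1, hle⟩ := fwd p ℓ d hf
      exact csInf_le_of_le hbdd1 ⟨ℓ, d, hf1, rfl⟩ hle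
  · -- optimality transfer
    intro p ℓ d hf hopt
    obtain ⟨hf1, hle⟩ := fwd p ℓ d hf
    refine ⟨hf1, fun ℓ' d' hf' => ?_⟩
    obtain ⟨p', hp', hv'⟩ := bwd ℓ' d' hf'
    calc ∑ i ∈ Finset.Icc 1 N, 1 / (η * h) * (Eloc ζ C τ (ℓ i) + Eoff τ σ2 g B (d i))
        ≤ ∑ i ∈ Finset.Icc 1 N, τ * p i := hle
      _ ≤ ∑ i ∈ Finset.Icc 1 N, τ * p' i := hopt p' ℓ' d' hp'
      _ = _ := hv'
end

section
/- (Sufficiency part of Theorem 1.) Let ν_1 ≤ ν_2 ≤ … ≤ ν_N be real numbers and define, for each i ∈ {1,…,N}, ℓ_i = τ·√(η h · max(ν_i, 0)/(3 ζ C³)) and d_i = τ B · log₂( max( ν_i · B η h g/(σ² ln 2), 1 ) ). Suppose (ℓ, d) satisfies the task-causality constraints Σ_{j=1}^i (ℓ_j + d_j) ≤ Σ_{j=1}^i A_j for every i ∈ {1,…,N−1} and the task-completion constraint Σ_{j=1}^N (ℓ_j + d_j) = Σ_{j=1}^N A_j, and suppose that for every i ∈ {1,…,N−1} with ν_i < ν_{i+1}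 the constraint at slot i is tight: Σ_{j=1}^i (ℓ_j + d_j) = Σ_{j=1}^i A_j. Then (ℓ, d) is an optimal solution of problem (P2.1). -/
open Finset

lemma cube_tangent (a x : ℝ) (ha : 0 ≤ a) (hx : 0 ≤ x) :
    a ^ 3 + 3 * a ^ 2 * (x - a) ≤ x ^ 3 := by
  nlinarith [mul_nonneg (sq_nonneg (x - a)) (by linarith : (0:ℝ) ≤ x + 2 * a)]

lemma two_rpow_tangent (s t : ℝ) :
    (2:ℝ) ^ s * (1 + Real.log 2 * (t - s)) ≤ (2:ℝ) ^ t := by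
  have h2 : (0:ℝ) < 2 := by norm_num
  rw [Real.rpow_def_of_pos h2, Real.rpow_def_of_pos h2]
  have h1 := Real.add_one_le_exp (Real.log 2 * (t - s))
  have hpos := Real.exp_pos (Real.log 2 * s)
  calc Real.exp (Real.log 2 * s) * (1 + Real.log 2 * (t - s))
      ≤ Real.exp (Real.log 2 * s) * Real.exp (Real.log 2 * (t - s)) := by
        apply mul_le_mul_of_nonneg_left (by linarith) hpos.le
    _ = Real.exp (Real.log 2 * t) := by rw [← Real.exp_add]; ring_nf

lemma loc_key (η h ζ C τ ν x : ℝ) (hη : 0 < η) (hh : 0 < h) (hζ : 0 < ζ)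
    (hC : 0 < C) (hτ : 0 < τ) (hx : 0 ≤ x) :
    1 / (η * h) * Eloc ζ C τ (τ * Real.sqrt (η * h * max ν 0 / (3 * ζ * C ^ 3)))
      + ν * (x - τ * Real.sqrt (η * h * max ν 0 / (3 * ζ * C ^ 3)))
      ≤ 1 / (η * h) * Eloc ζ C τ x := by
  set q : ℝ := η * h * max ν 0 / (3 * ζ * C ^ 3) with hq
  have hq0 : 0 ≤ q := by positivity
  set a : ℝ := τ * Real.sqrt q with hadef
  have ha0 : 0 ≤ a := by positivity
  have ha2 : a ^ 2 = τ ^ 2 * q := by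
    rw [hadef, mul_pow, Real.sq_sqrt hq0]
  have hM : max ν 0 = 3 * ζ * C ^ 3 * q / (η * h) := by
    rw [hq]; field_simp
  have hstep : ν * (x - a) ≤ max ν 0 * (x - a) := by
    rcases le_or_gt 0 ν with hν | hν
    · rw [max_eq_left hν]
    · have hm0 : max ν 0 = 0 := max_eq_right hν.le
      have hq0' : q = 0 := by rw [hq, hm0]; ring
      have ha' : a = 0 := by rw [hadef, hq0', Real.sqrt_zero, mul_zero]
      rw [hm0, ha', sub_zero, zero_mul]
      exact mul_nonpos_of_nonpos_of_nonneg hν.le hx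
  have key := cube_tangent a x ha0 hx
  have hcoef : (0:ℝ) ≤ ζ * C ^ 3 / (η * h * τ ^ 2) := by positivity
  have hprod : 0 ≤ (ζ * C ^ 3 / (η * h * τ ^ 2)) * (x ^ 3 - (a ^ 3 + 3 * a ^ 2 * (x - a))) :=
    mul_nonneg hcoef (by linarith)
  have expand : 1 / (η * h) * Eloc ζ C τ x - 1 / (η * h) * Eloc ζ C τ a - max ν 0 * (x - a)
      = (ζ * C ^ 3 / (η * h * τ ^ 2)) * (x ^ 3 - (a ^ 3 + 3 * a ^ 2 * (x - a))) := by
    have hM' : max ν 0 = 3 * ζ * C ^ 3 * a ^ 2 / (η * h * τ ^ 2) := by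
      rw [hM, ha2]; field_simp
    rw [hM']
    unfold Eloc
    field_simp
    ring
  linarith

lemma off_key (η h g σ2 B τ ν y : ℝ) (hη : 0 < η) (hh : 0 < h) (hg : 0 < g)
    (hσ2 : 0 < σ2) (hB : 0 < B) (hτ : 0 < τ) (hy : 0 ≤ y) :
    1 / (η * h) * Eoff τ σ2 g B (τ * B * Real.logb 2 (max (ν * (B * η * h * g) / (σ2 * Real.log 2)) 1))
      + ν * (y - τ * B * Real.logb 2 (max (ν * (B * η * h * g) / (σ2 * Real.log 2)) 1))
      ≤ 1 / (η * h) * Eoff τ σ2 g B y := by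
  have hL : 0 < Real.log 2 := Real.log_pos (by norm_num)
  set M : ℝ := max (ν * (B * η * h * g) / (σ2 * Real.log 2)) 1 with hMdef
  have hM1 : (1:ℝ) ≤ M := le_max_right _ _
  have hM0 : (0:ℝ) < M := lt_of_lt_of_le one_pos hM1
  set dd : ℝ := τ * B * Real.logb 2 M with hdd
  have hdiv : dd / (τ * B) = Real.logb 2 M := by
    rw [hdd]; field_simp
  have hpow : (2:ℝ) ^ (dd / (τ * B)) = M := by
    rw [hdiv]; exact Real.rpow_logb (by norm_num) (by norm_num) hM0
  have tangent := two_rpow_tangent (Real.logb 2 M) (y / (τ * B))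
  rw [Real.rpow_logb (by norm_num) (by norm_num) hM0] at tangent
  set S : ℝ := σ2 * Real.log 2 * M / (η * h * g * B) with hS
  have main : 1/(η*h) * Eoff τ σ2 g B dd + S * (y - dd) ≤ 1/(η*h) * Eoff τ σ2 g B y := by
    unfold Eoff
    rw [hpow]
    have h1 : S * (y - dd) = 1/(η*h) * (τ*σ2/g) *
        (Real.log 2 * M * (y/(τ*B) - Real.logb 2 M)) := by
      rw [hS, hdd]; field_simp
    have hc : (0:ℝ) ≤ 1/(η*h) * (τ*σ2/g) := by positivity
    nlinarith [mul_le_mul_of_nonneg_left tangent hc]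
  have hνS : ν * (y - dd) ≤ S * (y - dd) := by
    rcases le_or_gt 1 (ν * (B * η * h * g) / (σ2 * Real.log 2)) with hcase | hcase
    · have hMeq : M = ν * (B * η * h * g) / (σ2 * Real.log 2) := max_eq_left hcase
      have hSeq : S = ν := by rw [hS, hMeq]; field_simp
      rw [hSeq]
    · have hMeq : M = 1 := max_eq_right hcase.le
      have hdd0 : dd = 0 := by rw [hdd, hMeq, Real.logb_one, mul_zero]
      have hνlt : ν ≤ S := by
        rw [hS, hMeq]
        rw [div_lt_one (by positivity)] at hcase
        rw [le_div_iff₀ (by positivity)]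
        nlinarith
      rw [hdd0, sub_zero]
      exact mul_le_mul_of_nonneg_right hνlt hy
  linarith

/-- Sufficiency part of Theorem 1: a feasible allocation of the stated closed form,
driven by nondecreasing computation levels `ν` whose increase slots have tight task
causality, is optimal for (P2.1). -/
theorem stmt_2
    (N : ℕ) (hN : 0 < N)
    (τ η h g ζ C σ2 B : ℝ)
    (hτ : 0 < τ) (hη : 0 < η) (hh : 0 < h) (hg : 0 < g)
    (hζ : 0 < ζ) (hC : 0 < C) (hσ2 : 0 < σ2) (hB : 0 < B)
    (A : ℕ → ℝ) (hA : ∀ i ∈ Finset.Icc 1 N, 0 ≤ A i)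
    (ν : ℕ → ℝ) (hν : ∀ i ∈ Finset.Icc 1 (N - 1), ν i ≤ ν (i + 1))
    (ℓ d : ℕ → ℝ)
    (hℓ : ∀ i ∈ Finset.Icc 1 N,
      ℓ i = τ * Real.sqrt (η * h * max (ν i) 0 / (3 * ζ * C ^ 3)))
    (hd : ∀ i ∈ Finset.Icc 1 N,
      d i = τ * B * Real.logb 2 (max (ν i * (B * η * h * g) / (σ2 * Real.log 2)) 1))
    (hfeas : FeasP21 N A ℓ d)
    (htight : ∀ i ∈ Finset.Icc 1 (N - 1), ν i < ν (i + 1) →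
      ∑ j ∈ Finset.Icc 1 i, (ℓ j + d j) = ∑ j ∈ Finset.Icc 1 i, A j) :
    ∀ ℓ' d' : ℕ → ℝ, FeasP21 N A ℓ' d' →
      ∑ i ∈ Finset.Icc 1 N, 1 / (η * h) * (Eloc ζ C τ (ℓ i) + Eoff τ σ2 g B (d i))
        ≤ ∑ i ∈ Finset.Icc 1 N, 1 / (η * h) * (Eloc ζ C τ (ℓ' i) + Eoff τ σ2 g B (d' i)) := by
  intro ℓ' d' hfeas'
  obtain ⟨hnn, hcaus, hcomp⟩ := hfeas
  obtain ⟨hnn', hcaus', hcomp'⟩ := hfeas'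
  have key : ∀ i ∈ Finset.Icc 1 N,
      1 / (η * h) * (Eloc ζ C τ (ℓ i) + Eoff τ σ2 g B (d i))
        + ν i * ((ℓ' i + d' i) - (ℓ i + d i))
        ≤ 1 / (η * h) * (Eloc ζ C τ (ℓ' i) + Eoff τ σ2 g B (d' i)) := by
    intro i hi
    obtain ⟨hx, hy⟩ := hnn' i hi
    have h1 := loc_key η h ζ C τ (ν i) (ℓ' i) hη hh hζ hC hτ hx
    have h2 := off_key η h g σ2 B τ (ν i) (d' i) hη hh hg hσ2 hB hτ hy
    rw [← hℓ i hi] at h1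
    rw [← hd i hi] at h2
    linarith
  have sum_key := Finset.sum_le_sum key
  rw [Finset.sum_add_distrib] at sum_key
  suffices hts : 0 ≤ ∑ i ∈ Finset.Icc 1 N, ν i * ((ℓ' i + d' i) - (ℓ i + d i)) by
    linarith
  set t : ℕ → ℝ := fun i => (ℓ' i + d' i) - (ℓ i + d i) with ht
  set T : ℕ → ℝ := fun n => ∑ j ∈ Finset.Icc 1 n, t j with hT
  have hTeq : ∀ n, T n = (∑ j ∈ Finset.Icc 1 n, (ℓ' j + d' j))
      - ∑ j ∈ Finset.Icc 1 n, (ℓ j + d j) := by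
    intro n
    simp only [hT, ht, Finset.sum_sub_distrib]
  have hTN : T N = 0 := by
    rw [hTeq, hcomp, hcomp']
    ring
  have hTle : ∀ i ∈ Finset.Icc 1 (N - 1), ν i < ν (i + 1) → T i ≤ 0 := by
    intro i hi hlt
    have h1 := hcaus' i hi
    have h2 := htight i hi hlt
    rw [hTeq]
    linarith
  have claim : ∀ n, 1 ≤ n → n ≤ N → ν n * T n ≤ ∑ i ∈ Finset.Icc 1 n, ν i * t i := by
    intro n
    induction n with
    | zero => intro h1 _; omega
    | succ m ih =>
      intro _ hle
      rcases Nat.eq_zero_or_pos m with hm | hm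
      · subst hm
        simp [hT]
      · have hmN : m ≤ N := by omega
        have hmem : m ∈ Finset.Icc 1 (N - 1) := by
          rw [Finset.mem_Icc]; omega
        have hmono := hν m hmem
        have hstep : ∑ i ∈ Finset.Icc 1 (m + 1), ν i * t i
            = (∑ i ∈ Finset.Icc 1 m, ν i * t i) + ν (m + 1) * t (m + 1) :=
          Finset.sum_Icc_succ_top (by omega) _
        have hTstep : T (m + 1) = T m + t (m + 1) := by
          simp only [hT]
          exact Finset.sum_Icc_succ_top (by omega) _
        have ihm := ih hm hmN
        have hprod : (ν (m + 1) - ν m) * T m ≤ 0 := by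
          rcases lt_or_eq_of_le hmono with hlt | heq
          · exact mul_nonpos_of_nonneg_of_nonpos (by linarith) (hTle m hmem hlt)
          · rw [← heq]; simp
        rw [hstep, hTstep]
        nlinarith [ihm, hprod]
  have hfin := claim N (by omega) le_rfl
  rw [hTN, mul_zero] at hfin
  exact hfin
end

section
/- (Necessity part of Theorem 1, combined with Proposition 1.) For every optimal solution (ℓ*, d*) of problem (P2.1) there exist real numbers ν_1 ≤ ν_2 ≤ … ≤ ν_N such that for every i ∈ {1,…,N}: ℓ*_i = τ·√(η h · max(ν_i, 0)/(3 ζ C³)) and d*_i = τ B · log₂( max( ν_i · B η h g/(σ² ln 2), 1 ) ), and such that for every i ∈ {1,…,N−1} with ν_i < ν_{i+1} the task-causality constraint at slot i is tight: Σ_{j=1}^i (ℓ*_j + d*_j) = Σ_{j=1}^i A_j. -/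
/-! Shifting `ε` of work from local computing to offloading inside one slot leaves every partial
sum unchanged, so optimality yields the first-order conditions `E_loc'(ℓ_i) ≤ E_off'(d_i)`, with
equality when `d_i > 0`; solved for `d_i` this is the logarithmic formula, with
`ν_i = E_loc'(ℓ_i) / (ηh)`. Shifting local work from slot `i + 1` to slot `i` changes only the
partial sum at `i`, and by strict convexity of `x ↦ x³` it lowers the energy if
`ℓ_i > ℓ_{i+1}` (always feasible) or if `ℓ_i < ℓ_{i+1}` and the causality constraint at `i` is
slack. Hence `ℓ`, and with it `ν`, is nondecreasing, and the constraint is tight wherever `ν`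
increases. -/

open Finset

open Real

namespace FeasP21

variable {N : ℕ} {A ℓ d : ℕ → ℝ} {i : ℕ} {ε : ℝ}

theorem sub_single_add_single (hf : FeasP21 N A ℓ d) (hi : i ∈ Icc 1 N)
    (hℓ : 0 ≤ ℓ i - ε) (hd : 0 ≤ d i + ε) :
    FeasP21 N A (ℓ - Pi.single i ε) (d + Pi.single i ε) := by
  obtain ⟨hnn, hcaus, hcomp⟩ := hf
  have hsum :
      ∀ j, (ℓ - Pi.single i ε : ℕ → ℝ) j + (d + Pi.single i ε : ℕ → ℝ) j = ℓ j + d j :=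
    fun j => by simp only [Pi.sub_apply, Pi.add_apply]; ring
  refine ⟨fun j hj => ?_, fun k hk => ?_, ?_⟩
  · rcases eq_or_ne j i with rfl | hji
    · simp only [Pi.sub_apply, Pi.add_apply, Pi.single_eq_same]
      exact ⟨hℓ, hd⟩
    · simpa [hji] using hnn j hj
  · simpa only [hsum] using hcaus k hk
  · simpa only [hsum] using hcomp

theorem add_single_sub_single (hf : FeasP21 N A ℓ d) (hi : i ∈ Icc 1 (N - 1))
    (hℓi : 0 ≤ ℓ i + ε) (hℓi' : 0 ≤ ℓ (i + 1) - ε)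
    (hslack : ∑ j ∈ Icc 1 i, (ℓ j + d j) + ε ≤ ∑ j ∈ Icc 1 i, A j) :
    FeasP21 N A (ℓ + Pi.single i ε - Pi.single (i + 1) ε) d := by
  obtain ⟨hnn, hcaus, hcomp⟩ := hf
  rw [mem_Icc] at hi
  have hsplit : ∀ j, (ℓ + Pi.single i ε - Pi.single (i + 1) ε : ℕ → ℝ) j + d j
      = ℓ j + d j + (Pi.single i ε : ℕ → ℝ) j - (Pi.single (i + 1) ε : ℕ → ℝ) j :=
    fun j => by simp only [Pi.add_apply, Pi.sub_apply]; ring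
  have hpartial : ∀ k,
      ∑ j ∈ Icc 1 k, ((ℓ + Pi.single i ε - Pi.single (i + 1) ε : ℕ → ℝ) j + d j)
        = ∑ j ∈ Icc 1 k, (ℓ j + d j) + (if i ∈ Icc 1 k then ε else 0)
          - (if i + 1 ∈ Icc 1 k then ε else 0) := fun k => by
    simp only [hsplit, sum_add_distrib, sum_sub_distrib, sum_pi_single']
  refine ⟨fun j hj => ?_, fun k hk => ?_, ?_⟩
  · rcases eq_or_ne j i with rfl | hji
    · refine ⟨?_, (hnn j hj).2⟩
      simpa using hℓi
    rcases eq_or_ne j (i + 1) with rfl | hji'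
    · refine ⟨?_, (hnn _ hj).2⟩
      simpa [sub_nonneg] using hℓi'
    · simpa [hji, hji'] using hnn j hj
  · have hcaus_k := hcaus k hk
    rw [mem_Icc] at hk
    rw [hpartial]
    rcases lt_trichotomy k i with hki | rfl | hki
    · rw [if_neg (by simp only [mem_Icc]; omega), if_neg (by simp only [mem_Icc]; omega)]
      linarith
    · rw [if_pos (by simp only [mem_Icc]; omega), if_neg (by simp only [mem_Icc]; omega)]
      linarith
    · rw [if_pos (by simp only [mem_Icc]; omega), if_pos (by simp only [mem_Icc]; omega)]
      linarith
  · rw [hpartial, if_pos (by simp only [mem_Icc]; omega),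
      if_pos (by simp only [mem_Icc]; omega), hcomp]
    ring

end FeasP21

structure IsOptimalP21 (N : ℕ) (A : ℕ → ℝ) (c : ℝ → ℝ → ℝ) (ℓ d : ℕ → ℝ) : Prop where
  feas : FeasP21 N A ℓ d
  le : ∀ ℓ' d' : ℕ → ℝ, FeasP21 N A ℓ' d' →
    ∑ i ∈ Icc 1 N, c (ℓ i) (d i) ≤ ∑ i ∈ Icc 1 N, c (ℓ' i) (d' i)

namespace IsOptimalP21

variable {N : ℕ} {A ℓ d : ℕ → ℝ} {i : ℕ} {ε : ℝ}

theorem le_shift_within {c : ℝ → ℝ → ℝ} (h : IsOptimalP21 N A c ℓ d)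
    (hi : i ∈ Icc 1 N) (hℓ : 0 ≤ ℓ i - ε) (hd : 0 ≤ d i + ε) :
    c (ℓ i) (d i) ≤ c (ℓ i - ε) (d i + ε) := by
  have hle := h.le _ _ (h.feas.sub_single_add_single hi hℓ hd)
  have hdiff : ∑ j ∈ Icc 1 N,
      (c ((ℓ - Pi.single i ε : ℕ → ℝ) j) ((d + Pi.single i ε : ℕ → ℝ) j)
        - c (ℓ j) (d j))
        = c (ℓ i - ε) (d i + ε) - c (ℓ i) (d i) := by
    rw [sum_eq_single_of_mem i hi]
    · simp
    · intro j _ hji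
      simp [hji]
  rw [sum_sub_distrib] at hdiff
  linarith

theorem le_shift_adjacent {c : ℝ → ℝ → ℝ} (h : IsOptimalP21 N A c ℓ d)
    (hi : i ∈ Icc 1 (N - 1)) (hℓi : 0 ≤ ℓ i + ε) (hℓi' : 0 ≤ ℓ (i + 1) - ε)
    (hslack : ∑ j ∈ Icc 1 i, (ℓ j + d j) + ε ≤ ∑ j ∈ Icc 1 i, A j) :
    c (ℓ i) (d i) + c (ℓ (i + 1)) (d (i + 1))
      ≤ c (ℓ i + ε) (d i) + c (ℓ (i + 1) - ε) (d (i + 1)) := by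
  have hle := h.le _ _ (h.feas.add_single_sub_single hi hℓi hℓi' hslack)
  simp only [mem_Icc] at hi
  have hdiff : ∑ j ∈ Icc 1 N,
      (c ((ℓ + Pi.single i ε - Pi.single (i + 1) ε : ℕ → ℝ) j) (d j) - c (ℓ j) (d j))
        = (c (ℓ i + ε) (d i) - c (ℓ i) (d i))
          + (c (ℓ (i + 1) - ε) (d (i + 1)) - c (ℓ (i + 1)) (d (i + 1))) := by
    rw [sum_eq_add_of_mem i (i + 1) (by simp only [mem_Icc]; omega)
      (by simp only [mem_Icc]; omega) (by omega)]
    · simp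
    · rintro j _ ⟨hji, hji'⟩
      simp [hji, hji']
  rw [sum_sub_distrib] at hdiff
  linarith

end IsOptimalP21

theorem le_of_forall_le_sub_add {f g : ℝ → ℝ} {f' g' x y b : ℝ} (hf : HasDerivAt f f' x)
    (hg : HasDerivAt g g' y) (hb : 0 < b)
    (h : ∀ t ∈ Set.Ioo 0 b, f x + g y ≤ f (x - t) + g (y + t)) : f' ≤ g' := by
  have hφ : HasDerivAt (fun t => f (x - t) + g (y + t)) (-f' + g') 0 :=
    (HasDerivAt.comp_const_sub x 0 (by rwa [sub_zero])).add
      (HasDerivAt.comp_const_add y 0 (by rwa [add_zero]))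
  have hslope : ∀ᶠ t in nhdsWithin 0 (Set.Ioi 0),
      0 ≤ t⁻¹ • ((f (x - (0 + t)) + g (y + (0 + t))) - (f (x - 0) + g (y + 0))) := by
    filter_upwards [Ioo_mem_nhdsGT hb] with t ht
    rw [zero_add, sub_zero, add_zero, smul_eq_mul]
    exact mul_nonneg (inv_nonneg.2 ht.1.le) (sub_nonneg.2 (h t ht))
  linarith [ge_of_tendsto hφ.tendsto_slope_zero_right hslope]

theorem hasDerivAt_Eloc (ζ C τ x : ℝ) :
    HasDerivAt (Eloc ζ C τ) (3 * ζ * C ^ 3 * x ^ 2 / τ ^ 2) x :=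
  (((hasDerivAt_pow 3 x).const_mul (ζ * C ^ 3)).div_const (τ ^ 2)).congr_deriv (by ring)

theorem hasDerivAt_Eoff {τ : ℝ} (σ2 g B : ℝ) (hτ : τ ≠ 0) (x : ℝ) :
    HasDerivAt (Eoff τ σ2 g B) (σ2 * log 2 / (g * B) * 2 ^ (x / (τ * B))) x :=
  ((((hasDerivAt_id' x).div_const (τ * B)).const_rpow two_pos).sub_const 1
    |>.const_mul (τ * σ2 / g)).congr_deriv (by field_simp)

theorem Eloc_add_add_Eloc_sub_lt {ζ C τ a b ε : ℝ} (hζ : 0 < ζ) (hC : 0 < C) (hτ : τ ≠ 0)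
    (ha : 0 ≤ a) (hb : 0 ≤ b) (hε : 0 < ε * (b - a - ε)) :
    Eloc ζ C τ (a + ε) + Eloc ζ C τ (b - ε) < Eloc ζ C τ a + Eloc ζ C τ b := by
  have hab : 0 < a + b := by
    by_contra! h0
    obtain rfl : a = 0 := by linarith
    obtain rfl : b = 0 := by linarith
    nlinarith [sq_nonneg ε]
  have hcube : (a + ε) ^ 3 + (b - ε) ^ 3 = a ^ 3 + b ^ 3 - 3 * (a + b) * (ε * (b - a - ε)) := by
    ring
  simp only [Eloc]
  rw [← add_div, ← add_div, div_lt_div_iff_of_pos_right (by positivity),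
    ← mul_add, ← mul_add, hcube]
  nlinarith [mul_pos (by positivity : 0 < ζ * C ^ 3) (mul_pos hab hε)]

theorem eq_mul_logb_max_div_one {y u κ s : ℝ} (hy : 0 ≤ y) (hκ : 0 < κ) (hs : 0 < s)
    (hle : u ≤ κ * 2 ^ (y / s)) (heq : 0 < y → u = κ * 2 ^ (y / s)) :
    y = s * logb 2 (max (u / κ) 1) := by
  rcases hy.eq_or_lt with rfl | hpos
  · rw [max_eq_right ((div_le_one hκ).2 (by simpa using hle)), logb_one, mul_zero]
  · rw [heq hpos, mul_div_cancel_left₀ _ hκ.ne',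
      max_eq_left (one_le_rpow one_le_two (by positivity)), logb_rpow two_pos (by norm_num)]
    field_simp

namespace IsOptimalP21

variable {N : ℕ} {A ℓ d : ℕ → ℝ} {i : ℕ}

theorem marginal_fst_le_of_pos {f g : ℝ → ℝ} {f' g' : ℝ}
    (h : IsOptimalP21 N A (fun x y => f x + g y) ℓ d)
    (hi : i ∈ Icc 1 N) (hf : HasDerivAt f f' (ℓ i)) (hg : HasDerivAt g g' (d i))
    (hℓ : 0 < ℓ i) : f' ≤ g' :=
  le_of_forall_le_sub_add hf hg hℓ fun t ht =>
    h.le_shift_within hi (by linarith [ht.2]) (by linarith [ht.1, (h.feas.1 i hi).2])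

theorem marginal_snd_le_of_pos {f g : ℝ → ℝ} {f' g' : ℝ}
    (h : IsOptimalP21 N A (fun x y => f x + g y) ℓ d)
    (hi : i ∈ Icc 1 N) (hf : HasDerivAt f f' (ℓ i)) (hg : HasDerivAt g g' (d i))
    (hd : 0 < d i) : g' ≤ f' :=
  le_of_forall_le_sub_add hg hf hd fun t ht => by
    have := h.le_shift_within hi (ε := -t) (by linarith [ht.1, (h.feas.1 i hi).1])
      (by linarith [ht.2])
    rw [sub_neg_eq_add, ← sub_eq_add_neg] at this
    linarith

variable {ζ C τ : ℝ}

theorem local_le_succ {g : ℝ → ℝ}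
    (h : IsOptimalP21 N A (fun x y => Eloc ζ C τ x + g y) ℓ d)
    (hζ : 0 < ζ) (hC : 0 < C) (hτ : τ ≠ 0) (hi : i ∈ Icc 1 (N - 1)) :
    ℓ i ≤ ℓ (i + 1) := by
  have hmem : i ∈ Icc 1 N ∧ i + 1 ∈ Icc 1 N := by simp only [mem_Icc] at hi ⊢; omega
  have ha := (h.feas.1 _ hmem.1).1
  have hb := (h.feas.1 _ hmem.2).1
  by_contra! hlt
  have hle := h.le_shift_adjacent hi (ε := (ℓ (i + 1) - ℓ i) / 2) (by linarith) (by linarith)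
    (by linarith [h.feas.2.1 i hi])
  have hlt := Eloc_add_add_Eloc_sub_lt hζ hC hτ ha hb (ε := (ℓ (i + 1) - ℓ i) / 2)
    (by nlinarith)
  linarith

theorem causality_tight_of_lt {g : ℝ → ℝ}
    (h : IsOptimalP21 N A (fun x y => Eloc ζ C τ x + g y) ℓ d)
    (hζ : 0 < ζ) (hC : 0 < C) (hτ : τ ≠ 0) (hi : i ∈ Icc 1 (N - 1))
    (hlt : ℓ i < ℓ (i + 1)) :
    ∑ j ∈ Icc 1 i, (ℓ j + d j) = ∑ j ∈ Icc 1 i, A j := by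
  have hmem : i ∈ Icc 1 N ∧ i + 1 ∈ Icc 1 N := by simp only [mem_Icc] at hi ⊢; omega
  by_contra hne
  set s := ∑ j ∈ Icc 1 i, A j - ∑ j ∈ Icc 1 i, (ℓ j + d j)
  have hs : 0 < s := sub_pos.2 (lt_of_le_of_ne (h.feas.2.1 i hi) hne)
  set ε := min ((ℓ (i + 1) - ℓ i) / 2) s
  have hε : 0 < ε := lt_min (by linarith) hs
  have hεℓ : ε ≤ (ℓ (i + 1) - ℓ i) / 2 := min_le_left _ _
  have hεs : ε ≤ s := min_le_right _ _
  have ha := (h.feas.1 _ hmem.1).1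
  have hle := h.le_shift_adjacent hi (ε := ε) (by linarith) (by linarith) (by linarith)
  have hlt := Eloc_add_add_Eloc_sub_lt hζ hC hτ ha (h.feas.1 _ hmem.2).1
    (mul_pos hε (by linarith))
  linarith

theorem offload_eq_logb {σ2 g B : ℝ}
    (h : IsOptimalP21 N A (fun x y => Eloc ζ C τ x + Eoff τ σ2 g B y) ℓ d)
    (hτ : 0 < τ) (hσ2 : 0 < σ2) (hg : 0 < g) (hB : 0 < B) (hi : i ∈ Icc 1 N) :
    d i = τ * B
      * logb 2 (max (3 * ζ * C ^ 3 * ℓ i ^ 2 / τ ^ 2 / (σ2 * log 2 / (g * B))) 1) := by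
  have hκ : 0 < σ2 * log 2 / (g * B) := by have := log_pos one_lt_two; positivity
  have hEloc := hasDerivAt_Eloc ζ C τ (ℓ i)
  have hEoff := hasDerivAt_Eoff σ2 g B hτ.ne' (d i)
  have hle :
      3 * ζ * C ^ 3 * ℓ i ^ 2 / τ ^ 2 ≤ σ2 * log 2 / (g * B) * 2 ^ (d i / (τ * B)) := by
    rcases (h.feas.1 i hi).1.eq_or_lt with hℓ | hℓ
    · rw [← hℓ, zero_pow two_ne_zero, mul_zero, zero_div]
      positivity
    · exact h.marginal_fst_le_of_pos hi hEloc hEoff hℓ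
  exact eq_mul_logb_max_div_one (h.feas.1 i hi).2 hκ (by positivity) hle
    fun hd => le_antisymm hle (h.marginal_snd_le_of_pos hi hEloc hEoff hd)

end IsOptimalP21

theorem stmt_3_general
    (N : ℕ)
    (τ η h g ζ C σ2 B : ℝ)
    (hτ : 0 < τ) (hη : 0 < η) (hh : 0 < h) (hg : 0 < g)
    (hζ : 0 < ζ) (hC : 0 < C) (hσ2 : 0 < σ2) (hB : 0 < B)
    (A : ℕ → ℝ)
    (ℓ d : ℕ → ℝ)
    (hfeas : FeasP21 N A ℓ d)
    (hopt : ∀ ℓ' d' : ℕ → ℝ, FeasP21 N A ℓ' d' →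
      ∑ i ∈ Finset.Icc 1 N, 1 / (η * h) * (Eloc ζ C τ (ℓ i) + Eoff τ σ2 g B (d i))
        ≤ ∑ i ∈ Finset.Icc 1 N, 1 / (η * h) * (Eloc ζ C τ (ℓ' i) + Eoff τ σ2 g B (d' i))) :
    ∃ ν : ℕ → ℝ,
      (∀ i ∈ Finset.Icc 1 (N - 1), ν i ≤ ν (i + 1)) ∧
      (∀ i ∈ Finset.Icc 1 N,
        ℓ i = τ * Real.sqrt (η * h * max (ν i) 0 / (3 * ζ * C ^ 3)) ∧
        d i = τ * B * Real.logb 2 (max (ν i * (B * η * h * g) / (σ2 * Real.log 2)) 1)) ∧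
      (∀ i ∈ Finset.Icc 1 (N - 1), ν i < ν (i + 1) →
        ∑ j ∈ Finset.Icc 1 i, (ℓ j + d j) = ∑ j ∈ Finset.Icc 1 i, A j) := by
  have hηh : 0 < η * h := mul_pos hη hh
  have hE : IsOptimalP21 N A (fun x y => Eloc ζ C τ x + Eoff τ σ2 g B y) ℓ d :=
    ⟨hfeas, fun ℓ' d' hf' => le_of_mul_le_mul_left
      (by simpa only [← mul_sum] using hopt ℓ' d' hf') (one_div_pos.2 hηh)⟩
  have hmem : ∀ i ∈ Icc 1 (N - 1), i ∈ Icc 1 N ∧ i + 1 ∈ Icc 1 N := fun i hi => by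
    simp only [mem_Icc] at hi ⊢; omega
  -- the marginal local energy `E_loc'(ℓ_i)`, scaled by `1 / (ηh)`
  set ν : ℕ → ℝ := fun i => 3 * ζ * C ^ 3 * ℓ i ^ 2 / τ ^ 2 / (η * h)
  have hν_mono : ∀ i j, 0 ≤ ℓ i → ℓ i ≤ ℓ j → ν i ≤ ν j := fun i j h0 hij => by
    simp only [ν]; gcongr
  refine ⟨ν, fun i hi => ?_, fun i hi => ⟨?_, ?_⟩, fun i hi hlt => ?_⟩
  · exact hν_mono _ _ (hfeas.1 i (hmem i hi).1).1 (hE.local_le_succ hζ hC hτ.ne' hi)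
  · have hℓ := (hfeas.1 i hi).1
    rw [max_eq_left (by positivity), show η * h * ν i / (3 * ζ * C ^ 3) = (ℓ i / τ) ^ 2 by
      simp only [ν]; field_simp, sqrt_sq (by positivity)]
    field_simp
  · rw [show ν i * (B * η * h * g) / (σ2 * log 2)
        = 3 * ζ * C ^ 3 * ℓ i ^ 2 / τ ^ 2 / (σ2 * log 2 / (g * B)) by
      simp only [ν]; field_simp]
    exact hE.offload_eq_logb hτ hσ2 hg hB hi
  · refine hE.causality_tight_of_lt hζ hC hτ.ne' hi (lt_of_not_ge fun hge => ?_)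
    exact hlt.not_ge (hν_mono _ _ (hfeas.1 _ (hmem i hi).2).1 hge)

/-- Necessity part of Theorem 1 (with Proposition 1): every optimal solution of (P2.1)
is of the stated closed form for some nondecreasing computation levels `ν`, and the
task-causality constraint is tight at every slot where `ν` strictly increases. -/
theorem stmt_3
    (N : ℕ) (hN : 0 < N)
    (τ η h g ζ C σ2 B : ℝ)
    (hτ : 0 < τ) (hη : 0 < η) (hh : 0 < h) (hg : 0 < g)
    (hζ : 0 < ζ) (hC : 0 < C) (hσ2 : 0 < σ2) (hB : 0 < B)
    (A : ℕ → ℝ) (hA : ∀ i ∈ Finset.Icc 1 N, 0 ≤ A i)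
    (ℓ d : ℕ → ℝ)
    (hfeas : FeasP21 N A ℓ d)
    (hopt : ∀ ℓ' d' : ℕ → ℝ, FeasP21 N A ℓ' d' →
      ∑ i ∈ Finset.Icc 1 N, 1 / (η * h) * (Eloc ζ C τ (ℓ i) + Eoff τ σ2 g B (d i))
        ≤ ∑ i ∈ Finset.Icc 1 N, 1 / (η * h) * (Eloc ζ C τ (ℓ' i) + Eoff τ σ2 g B (d' i))) :
    ∃ ν : ℕ → ℝ,
      (∀ i ∈ Finset.Icc 1 (N - 1), ν i ≤ ν (i + 1)) ∧
      (∀ i ∈ Finset.Icc 1 N,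
        ℓ i = τ * Real.sqrt (η * h * max (ν i) 0 / (3 * ζ * C ^ 3)) ∧
        d i = τ * B * Real.logb 2 (max (ν i * (B * η * h * g) / (σ2 * Real.log 2)) 1)) ∧
      (∀ i ∈ Finset.Icc 1 (N - 1), ν i < ν (i + 1) →
        ∑ j ∈ Finset.Icc 1 i, (ℓ j + d j) = ∑ j ∈ Finset.Icc 1 i, A j) :=
  stmt_3_general N τ η h g ζ C σ2 B hτ hη hh hg hζ hC hσ2 hB A ℓ d hfeas hopt
end

section
/- Let b > 0, c > 0 and ω ∈ ℝ, and define g(x) = c·(2^{x/b} − 1) − ω x for x ≥ 0. Then g attains its minimum over [0, ∞) at x* = b · log₂( max( ω b/(c ln 2), 1 ) ); that is, g(x*) ≤ g(x) for every x ≥ 0. -/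
/-- Per-slot stationarity for the offloading variable: `g(x) = c(2^{x/b} − 1) − ω x`
attains its minimum over `[0, ∞)` at `x* = b log₂(max(ωb/(c ln 2), 1))`. -/
theorem stmt_5 (b c ω : ℝ) (hb : 0 < b) (hc : 0 < c) :
    ∀ x : ℝ, 0 ≤ x →
      c * ((2 : ℝ) ^ (b * Real.logb 2 (max (ω * b / (c * Real.log 2)) 1) / b) - 1)
          - ω * (b * Real.logb 2 (max (ω * b / (c * Real.log 2)) 1))
        ≤ c * ((2 : ℝ) ^ (x / b) - 1) - ω * x := by
  intro x hx
  have hL : (0:ℝ) < Real.log 2 := Real.log_pos one_lt_two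
  set M := max (ω * b / (c * Real.log 2)) 1 with hMdef
  have hM1 : 1 ≤ M := le_max_right _ _
  have hM0 : (0:ℝ) < M := lt_of_lt_of_le one_pos hM1
  have hexp : b * Real.logb 2 M / b = Real.logb 2 M := by field_simp
  rw [hexp]
  have hpow : (2:ℝ) ^ (Real.logb 2 M) = M := Real.rpow_logb two_pos (by norm_num) hM0
  rw [hpow]
  have key : M * (1 + (x / b - Real.logb 2 M) * Real.log 2) ≤ (2:ℝ) ^ (x / b) := by
    have h1 : (2:ℝ) ^ (x/b) = M * (2:ℝ) ^ (x/b - Real.logb 2 M) := by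
      conv_lhs => rw [show x/b = Real.logb 2 M + (x/b - Real.logb 2 M) by ring]
      rw [Real.rpow_add two_pos, hpow]
    rw [h1]
    have h2 : 1 + (x/b - Real.logb 2 M) * Real.log 2 ≤ (2:ℝ) ^ (x/b - Real.logb 2 M) := by
      rw [Real.rpow_def_of_pos two_pos]
      have := Real.add_one_le_exp (Real.log 2 * (x/b - Real.logb 2 M))
      nlinarith
    nlinarith [hM0.le]
  have hd : ω * b * (x/b - Real.logb 2 M) ≤ c * M * Real.log 2 * (x/b - Real.logb 2 M) := by
    rcases le_or_gt (ω * b / (c * Real.log 2)) 1 with h | h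
    · have hMeq : M = 1 := max_eq_right h
      have hωb : ω * b ≤ c * Real.log 2 := by
        have := (div_le_one (by positivity)).mp h
        linarith
      have hlog : Real.logb 2 M = 0 := by rw [hMeq, Real.logb_one]
      have hq : 0 ≤ x / b := by positivity
      rw [hlog, hMeq, sub_zero]
      nlinarith [mul_le_mul_of_nonneg_right hωb hq]
    · have hMeq : M = ω * b / (c * Real.log 2) := max_eq_left h.le
      have heq : c * M * Real.log 2 = ω * b := by
        rw [hMeq]; field_simp
      rw [heq]
  have k2 : c * M + c * M * Real.log 2 * (x / b - Real.logb 2 M) ≤ c * (2:ℝ) ^ (x / b) := by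
    nlinarith [key, hc.le]
  have final : c * M + ω * b * (x / b - Real.logb 2 M)
      = c * M + ω * x - ω * b * Real.logb 2 M := by
    field_simp
    ring
  linarith [k2, hd, final]
end

section
/- (First property of Proposition 1.) Every optimal solution (ℓ, d) of problem (P2.1) is componentwise nondecreasing in time: ℓ_1 ≤ ℓ_2 ≤ … ≤ ℓ_N and d_1 ≤ d_2 ≤ … ≤ d_N. -/
open Finset

lemma sum_diff_two {s : Finset ℕ} {i j : ℕ} (hi : i ∈ s) (hj : j ∈ s) (hij : i ≠ j)
    (f f' : ℕ → ℝ) (h : ∀ k ∈ s, k ≠ i → k ≠ j → f' k = f k) :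
    ∑ k ∈ s, f' k + (f i + f j) = ∑ k ∈ s, f k + (f' i + f' j) := by
  have hj' : j ∈ s.erase i := Finset.mem_erase.mpr ⟨hij.symm, hj⟩
  have e1 : ∑ k ∈ (s.erase i).erase j, f' k = ∑ k ∈ (s.erase i).erase j, f k := by
    refine Finset.sum_congr rfl fun k hk => ?_
    have hk1 := Finset.mem_erase.mp hk
    have hk2 := Finset.mem_erase.mp hk1.2
    exact h k hk2.2 hk2.1 hk1.1
  rw [← Finset.sum_erase_add s f hi, ← Finset.sum_erase_add _ f hj',
      ← Finset.sum_erase_add s f' hi, ← Finset.sum_erase_add _ f' hj', e1]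
  ring

lemma feas_symm {N : ℕ} {A p q : ℕ → ℝ} (hf : FeasP21 N A p q) : FeasP21 N A q p := by
  obtain ⟨h1, h2, h3⟩ := hf
  refine ⟨fun i hi => ⟨(h1 i hi).2, (h1 i hi).1⟩, fun i hi => ?_, ?_⟩
  · simpa [add_comm] using h2 i hi
  · simpa [add_comm] using h3

lemma cube_mid (a b : ℝ) (ha : 0 ≤ a) (hb : 0 ≤ b) (hab : a ≠ b) :
    ((a+b)/2)^3 + ((a+b)/2)^3 < a^3 + b^3 := by
  have hpos : 0 < a + b := by
    rcases lt_or_eq_of_le ha with h1 | h1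
    · linarith
    · rcases lt_or_eq_of_le hb with h2 | h2
      · linarith
      · exact absurd (h1.symm.trans h2) hab
  have h2 : 0 < (a - b)^2 := by
    have : a - b ≠ 0 := sub_ne_zero.mpr hab
    positivity
  nlinarith [mul_pos hpos h2]

lemma rpow_mid (u v : ℝ) (huv : u ≠ v) :
    (2:ℝ) ^ ((u+v)/2) + (2:ℝ) ^ ((u+v)/2) < (2:ℝ) ^ u + (2:ℝ) ^ v := by
  set x := (2:ℝ) ^ (u/2) with hx
  set y := (2:ℝ) ^ (v/2) with hy
  have hxpos : 0 < x := Real.rpow_pos_of_pos two_pos _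
  have hypos : 0 < y := Real.rpow_pos_of_pos two_pos _
  have hxy : x ≠ y := by
    intro hxyeq
    apply huv
    have : u / 2 = v / 2 := by
      by_contra hne
      rcases lt_or_gt_of_ne hne with hlt | hlt
      · exact absurd hxyeq (ne_of_lt ((Real.rpow_lt_rpow_left_iff (by norm_num : (1:ℝ) < 2)).mpr hlt))
      · exact absurd hxyeq.symm (ne_of_lt ((Real.rpow_lt_rpow_left_iff (by norm_num : (1:ℝ) < 2)).mpr hlt))
    linarith
  have hu : (2:ℝ) ^ u = x * x := by
    rw [hx, ← Real.rpow_add two_pos]; norm_num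
  have hv : (2:ℝ) ^ v = y * y := by
    rw [hy, ← Real.rpow_add two_pos]; norm_num
  have hm : (2:ℝ) ^ ((u+v)/2) = x * y := by
    rw [hx, hy, ← Real.rpow_add two_pos]; ring_nf
  have hsq : 0 < (x - y)^2 := by
    have : x - y ≠ 0 := sub_ne_zero.mpr hxy
    positivity
  rw [hu, hv, hm]; nlinarith


lemma main_aux (N : ℕ) (hN : 0 < N) (A p q : ℕ → ℝ) (i : ℕ)
    (hi : i ∈ Finset.Icc 1 (N - 1)) (φ ψ : ℝ → ℝ)
    (hφ : ∀ a b : ℝ, 0 ≤ a → 0 ≤ b → a ≠ b → φ ((a+b)/2) + φ ((a+b)/2) < φ a + φ b)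
    (hfeas : FeasP21 N A p q)
    (hopt : ∀ p' q' : ℕ → ℝ, FeasP21 N A p' q' →
      ∑ k ∈ Finset.Icc 1 N, (φ (p k) + ψ (q k)) ≤ ∑ k ∈ Finset.Icc 1 N, (φ (p' k) + ψ (q' k))) :
    p i ≤ p (i + 1) := by
  by_contra hlt
  push_neg at hlt
  obtain ⟨hi1, hiN⟩ := Finset.mem_Icc.mp hi
  have hiN' : i + 1 ≤ N := by omega
  have hiS : i ∈ Finset.Icc 1 N := Finset.mem_Icc.mpr ⟨hi1, by omega⟩
  have hi1S : i + 1 ∈ Finset.Icc 1 N := Finset.mem_Icc.mpr ⟨by omega, hiN'⟩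
  set m := (p i + p (i+1)) / 2 with hm
  set p' : ℕ → ℝ := fun k => if k = i ∨ k = i + 1 then m else p k with hp'
  have hpi : 0 ≤ p i := (hfeas.1 i hiS).1
  have hpi1 : 0 ≤ p (i+1) := (hfeas.1 (i+1) hi1S).1
  have hm0 : 0 ≤ m := by rw [hm]; linarith
  have hmle : m ≤ p i := by rw [hm]; linarith
  have h2m : m + m = p i + p (i+1) := by rw [hm]; ring
  have hp'i : p' i = m := by simp [hp']
  have hp'i1 : p' (i+1) = m := by simp [hp']
  have hp'k : ∀ k, k ≠ i → k ≠ i + 1 → p' k = p k := by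
    intro k h1 h2; simp [hp', h1, h2]
  -- feasibility of the modified solution
  have hfeas' : FeasP21 N A p' q := by
    refine ⟨fun k hk => ?_, fun k hk => ?_, ?_⟩
    · by_cases hki : k = i ∨ k = i + 1
      · constructor
        · show 0 ≤ p' k; simp [hp', hki]; exact hm0
        · exact (hfeas.1 k hk).2
      · push_neg at hki
        rw [hp'k k hki.1 hki.2]; exact hfeas.1 k hk
    · obtain ⟨hk1, hk2⟩ := Finset.mem_Icc.mp hk
      rcases lt_trichotomy k i with hki | hki | hki
      · have : ∑ j ∈ Finset.Icc 1 k, (p' j + q j) = ∑ j ∈ Finset.Icc 1 k, (p j + q j) := by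
          refine Finset.sum_congr rfl fun j hj => ?_
          have hj2 := (Finset.mem_Icc.mp hj).2
          rw [hp'k j (by omega) (by omega)]
        rw [this]; exact hfeas.2.1 k hk
      · subst hki
        have hks : k ∈ Finset.Icc 1 k := Finset.mem_Icc.mpr ⟨hk1, le_refl _⟩
        have e1 : ∑ j ∈ (Finset.Icc 1 k).erase k, (p' j + q j)
            = ∑ j ∈ (Finset.Icc 1 k).erase k, (p j + q j) := by
          refine Finset.sum_congr rfl fun j hj => ?_
          obtain ⟨hjne, hjmem⟩ := Finset.mem_erase.mp hj
          have hj2 := (Finset.mem_Icc.mp hjmem).2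
          rw [hp'k j hjne (by omega)]
        have e2 := Finset.sum_erase_add (Finset.Icc 1 k) (fun j => p' j + q j) hks
        have e3 := Finset.sum_erase_add (Finset.Icc 1 k) (fun j => p j + q j) hks
        have := hfeas.2.1 k hk
        rw [← e2, e1, hp'i]
        rw [← e3] at this
        linarith
      · have hik : i ∈ Finset.Icc 1 k := Finset.mem_Icc.mpr ⟨hi1, by omega⟩
        have hi1k : i + 1 ∈ Finset.Icc 1 k := Finset.mem_Icc.mpr ⟨by omega, by omega⟩
        have := sum_diff_two hik hi1k (by omega) (fun j => p j + q j) (fun j => p' j + q j)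
          (fun j _ h1 h2 => by show p' j + q j = p j + q j; rw [hp'k j h1 h2])
        rw [hp'i, hp'i1] at this
        have heq : ∑ j ∈ Finset.Icc 1 k, (p' j + q j) = ∑ j ∈ Finset.Icc 1 k, (p j + q j) := by
          linarith
        rw [heq]; exact hfeas.2.1 k hk
    · have := sum_diff_two hiS hi1S (by omega) (fun j => p j + q j) (fun j => p' j + q j)
        (fun j _ h1 h2 => by show p' j + q j = p j + q j; rw [hp'k j h1 h2])
      rw [hp'i, hp'i1] at this
      have heq : ∑ j ∈ Finset.Icc 1 N, (p' j + q j) = ∑ j ∈ Finset.Icc 1 N, (p j + q j) := by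
        linarith
      rw [heq]; exact hfeas.2.2
  -- strict decrease of objective
  have hsum := sum_diff_two hiS hi1S (by omega) (fun k => φ (p k) + ψ (q k))
      (fun k => φ (p' k) + ψ (q k)) (fun k _ h1 h2 => by show φ (p' k) + ψ (q k) = φ (p k) + ψ (q k); rw [hp'k k h1 h2])
  rw [hp'i, hp'i1] at hsum
  have hstrict := hφ (p i) (p (i+1)) hpi hpi1 (by intro hmm; rw [hmm] at hlt; exact lt_irrefl _ hlt)
  have hopt' := hopt p' q hfeas'
  linarith

/-- First property of Proposition 1: every optimal solution of (P2.1) is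
componentwise nondecreasing in time. -/
theorem stmt_6
    (N : ℕ) (hN : 0 < N)
    (τ η h g ζ C σ2 B : ℝ)
    (hτ : 0 < τ) (hη : 0 < η) (hh : 0 < h) (hg : 0 < g)
    (hζ : 0 < ζ) (hC : 0 < C) (hσ2 : 0 < σ2) (hB : 0 < B)
    (A : ℕ → ℝ) (hA : ∀ i ∈ Finset.Icc 1 N, 0 ≤ A i)
    (ℓ d : ℕ → ℝ)
    (hfeas : FeasP21 N A ℓ d)
    (hopt : ∀ ℓ' d' : ℕ → ℝ, FeasP21 N A ℓ' d' →
      ∑ i ∈ Finset.Icc 1 N, 1 / (η * h) * (Eloc ζ C τ (ℓ i) + Eoff τ σ2 g B (d i))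
        ≤ ∑ i ∈ Finset.Icc 1 N, 1 / (η * h) * (Eloc ζ C τ (ℓ' i) + Eoff τ σ2 g B (d' i))) :
    ∀ i ∈ Finset.Icc 1 (N - 1), ℓ i ≤ ℓ (i + 1) ∧ d i ≤ d (i + 1) := by
  intro i hi
  have hc : (0:ℝ) < 1 / (η * h) := by positivity
  have htb : τ * B ≠ 0 := by positivity
  constructor
  · refine main_aux N hN A ℓ d i hi
      (fun x => 1 / (η * h) * Eloc ζ C τ x) (fun x => 1 / (η * h) * Eoff τ σ2 g B x)
      ?_ hfeas ?_
    · intro a b ha hb hab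
      have key := cube_mid a b ha hb hab
      have hcc : (0:ℝ) < 1 / (η * h) * (ζ * C ^ 3) / τ ^ 2 := by positivity
      have h1 : 1 / (η * h) * Eloc ζ C τ ((a + b) / 2) + 1 / (η * h) * Eloc ζ C τ ((a + b) / 2)
          = (1 / (η * h) * (ζ * C ^ 3) / τ ^ 2) * (((a + b) / 2) ^ 3 + ((a + b) / 2) ^ 3) := by
        unfold Eloc; ring
      have h2 : 1 / (η * h) * Eloc ζ C τ a + 1 / (η * h) * Eloc ζ C τ b
          = (1 / (η * h) * (ζ * C ^ 3) / τ ^ 2) * (a ^ 3 + b ^ 3) := by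
        unfold Eloc; ring
      rw [h1, h2]
      exact mul_lt_mul_of_pos_left key hcc
    · intro p' q' hf'
      have := hopt p' q' hf'
      simpa only [mul_add] using this
  · refine main_aux N hN A d ℓ i hi
      (fun x => 1 / (η * h) * Eoff τ σ2 g B x) (fun x => 1 / (η * h) * Eloc ζ C τ x)
      ?_ (feas_symm hfeas) ?_
    · intro a b ha hb hab
      have huv : a / (τ * B) ≠ b / (τ * B) := by
        intro hEq
        apply hab
        field_simp at hEq
        exact hEq
      have hmideq : ((a + b) / 2) / (τ * B) = (a / (τ * B) + b / (τ * B)) / 2 := by ring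
      have key := rpow_mid (a / (τ * B)) (b / (τ * B)) huv
      have hc2 : (0:ℝ) < 1 / (η * h) * (τ * σ2 / g) := by positivity
      simp only [Eoff]
      rw [hmideq]
      set X := (2:ℝ) ^ ((a / (τ * B) + b / (τ * B)) / 2) with hX
      set Y := (2:ℝ) ^ (a / (τ * B)) with hY
      set Z := (2:ℝ) ^ (b / (τ * B)) with hZ
      nlinarith [mul_lt_mul_of_pos_left key hc2]
    · intro p' q' hf'
      have e1 : ∑ k ∈ Finset.Icc 1 N,
          (1 / (η * h) * Eoff τ σ2 g B (d k) + 1 / (η * h) * Eloc ζ C τ (ℓ k))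
          = ∑ k ∈ Finset.Icc 1 N, 1 / (η * h) * (Eloc ζ C τ (ℓ k) + Eoff τ σ2 g B (d k)) :=
        Finset.sum_congr rfl fun k _ => by ring
      have e2 : ∑ k ∈ Finset.Icc 1 N,
          (1 / (η * h) * Eoff τ σ2 g B (p' k) + 1 / (η * h) * Eloc ζ C τ (q' k))
          = ∑ k ∈ Finset.Icc 1 N, 1 / (η * h) * (Eloc ζ C τ (q' k) + Eoff τ σ2 g B (p' k)) :=
        Finset.sum_congr rfl fun k _ => by ring
      show ∑ k ∈ Finset.Icc 1 N,
          (1 / (η * h) * Eoff τ σ2 g B (d k) + 1 / (η * h) * Eloc ζ C τ (ℓ k))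
          ≤ ∑ k ∈ Finset.Icc 1 N,
          (1 / (η * h) * Eoff τ σ2 g B (p' k) + 1 / (η * h) * Eloc ζ C τ (q' k))
      rw [e1, e2]
      exact hopt q' p' (feas_symm hf')
end

section
/- (Second property of Proposition 1, contrapositive form.) Let (ℓ, d) be an optimal solution of problem (P2.1). If for some i ∈ {1,…,N−1} the task-causality constraint at slot i is slack, i.e., Σ_{j=1}^i (ℓ_j + d_j) < Σ_{j=1}^i A_j, then ℓ_i = ℓ_{i+1} and d_i = d_{i+1}. -/
open Finset

lemma pair_lt {f : ℝ → ℝ} {S : Set ℝ} (hf : StrictConvexOn ℝ S f)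
    {a b lam : ℝ} (ha : a ∈ S) (hb : b ∈ S) (hab : a ≠ b)
    (h0 : 0 < lam) (h1 : lam < 1) :
    f ((1 - lam) * a + lam * b) + f (lam * a + (1 - lam) * b) < f a + f b := by
  have h1' : 0 < 1 - lam := by linarith
  have e1 := hf.2 ha hb hab h1' h0 (by ring)
  have e2 := hf.2 ha hb hab h0 h1' (by ring)
  simp only [smul_eq_mul] at e1 e2
  linarith

lemma Eloc_pair_lt (ζ C τ : ℝ) (hζ : 0 < ζ) (hC : 0 < C) (hτ : 0 < τ)
    {a b lam : ℝ} (ha : 0 ≤ a) (hb : 0 ≤ b) (hab : a ≠ b)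
    (h0 : 0 < lam) (h1 : lam < 1) :
    Eloc ζ C τ ((1 - lam) * a + lam * b) + Eloc ζ C τ (lam * a + (1 - lam) * b)
      < Eloc ζ C τ a + Eloc ζ C τ b := by
  have key := pair_lt (strictConvexOn_pow (n := 3) (by norm_num))
    (Set.mem_Ici.mpr ha) (Set.mem_Ici.mpr hb) hab h0 h1
  have hk : 0 < ζ * C ^ 3 / τ ^ 2 := by positivity
  have := mul_lt_mul_of_pos_left key hk
  unfold Eloc
  have e : ∀ x : ℝ, ζ * C ^ 3 * x ^ 3 / τ ^ 2 = ζ * C ^ 3 / τ ^ 2 * x ^ 3 := fun x => by ring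
  rw [e, e, e, e]
  linarith

lemma Eoff_pair_lt (τ σ2 g B : ℝ) (hτ : 0 < τ) (hσ2 : 0 < σ2) (hg : 0 < g) (hB : 0 < B)
    {a b lam : ℝ} (hab : a ≠ b) (h0 : 0 < lam) (h1 : lam < 1) :
    Eoff τ σ2 g B ((1 - lam) * a + lam * b) + Eoff τ σ2 g B (lam * a + (1 - lam) * b)
      < Eoff τ σ2 g B a + Eoff τ σ2 g B b := by
  have hτB : (0:ℝ) < τ * B := mul_pos hτ hB
  set k := Real.log 2 / (τ * B) with hk
  have hkpos : 0 < k := div_pos (Real.log_pos one_lt_two) hτB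
  have hre : ∀ x : ℝ, Eoff τ σ2 g B x = τ * σ2 / g * (Real.exp (k * x) - 1) := by
    intro x
    unfold Eoff
    rw [Real.rpow_def_of_pos two_pos]
    congr 2
    rw [hk]
    field_simp
  have hne : k * a ≠ k * b := by
    intro hcontra
    exact hab (mul_left_cancel₀ hkpos.ne' hcontra)
  have key := pair_lt strictConvexOn_exp (Set.mem_univ (k * a)) (Set.mem_univ (k * b)) hne h0 h1
  rw [show (1 - lam) * (k * a) + lam * (k * b) = k * ((1 - lam) * a + lam * b) by ring,
    show lam * (k * a) + (1 - lam) * (k * b) = k * (lam * a + (1 - lam) * b) by ring] at key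
  rw [hre, hre, hre, hre]
  have hc : 0 < τ * σ2 / g := by positivity
  nlinarith [key]

lemma sum_split_pair {G : ℕ → ℝ} {s : Finset ℕ} {i j : ℕ} (hij : i ≠ j)
    (hi : i ∈ s) (hj : j ∈ s) :
    ∑ k ∈ s, G k = ∑ k ∈ s \ {i, j}, G k + (G i + G j) := by
  have hsub : ({i, j} : Finset ℕ) ⊆ s := by
    intro x hx
    simp only [Finset.mem_insert, Finset.mem_singleton] at hx
    rcases hx with rfl | rfl <;> assumption
  rw [← Finset.sum_sdiff hsub, Finset.sum_pair hij]

/-- Second property of Proposition 1 (contrapositive form): if the task-causality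
constraint is slack at slot `i` in an optimal solution of (P2.1), then the allocation
is unchanged from slot `i` to slot `i+1`. -/
theorem stmt_7
    (N : ℕ) (hN : 0 < N)
    (τ η h g ζ C σ2 B : ℝ)
    (hτ : 0 < τ) (hη : 0 < η) (hh : 0 < h) (hg : 0 < g)
    (hζ : 0 < ζ) (hC : 0 < C) (hσ2 : 0 < σ2) (hB : 0 < B)
    (A : ℕ → ℝ) (hA : ∀ i ∈ Finset.Icc 1 N, 0 ≤ A i)
    (ℓ d : ℕ → ℝ)
    (hfeas : FeasP21 N A ℓ d)
    (hopt : ∀ ℓ' d' : ℕ → ℝ, FeasP21 N A ℓ' d' →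
      ∑ i ∈ Finset.Icc 1 N, 1 / (η * h) * (Eloc ζ C τ (ℓ i) + Eoff τ σ2 g B (d i))
        ≤ ∑ i ∈ Finset.Icc 1 N, 1 / (η * h) * (Eloc ζ C τ (ℓ' i) + Eoff τ σ2 g B (d' i)))
    (i : ℕ) (hi : i ∈ Finset.Icc 1 (N - 1))
    (hslack : ∑ j ∈ Finset.Icc 1 i, (ℓ j + d j) < ∑ j ∈ Finset.Icc 1 i, A j) :
    ℓ i = ℓ (i + 1) ∧ d i = d (i + 1) := by
  classical
  obtain ⟨hnn, hcaus, hcomp⟩ := hfeas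
  rw [Finset.mem_Icc] at hi
  have hiN : i ∈ Finset.Icc 1 N := Finset.mem_Icc.mpr ⟨hi.1, by omega⟩
  have hi1N : i + 1 ∈ Finset.Icc 1 N := Finset.mem_Icc.mpr ⟨by omega, by omega⟩
  have hii1 : i ≠ i + 1 := by omega
  have hii1' : i + 1 ≠ i := by omega
  by_contra hcon
  push_neg at hcon
  set s0 := ∑ j ∈ Finset.Icc 1 i, A j - ∑ j ∈ Finset.Icc 1 i, (ℓ j + d j) with hs0def
  have hs0 : 0 < s0 := by rw [hs0def]; linarith
  set Δ := (ℓ (i + 1) + d (i + 1)) - (ℓ i + d i) with hΔ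
  set lam := min (1 / 2 : ℝ) (s0 / (|Δ| + 1)) with hlamdef
  have hlam0 : 0 < lam := lt_min (by norm_num) (div_pos hs0 (by positivity))
  have hlam1 : lam < 1 := lt_of_le_of_lt (min_le_left _ _) (by norm_num)
  have hlamΔ : lam * Δ ≤ s0 := by
    have h1 : lam * Δ ≤ lam * |Δ| := mul_le_mul_of_nonneg_left (le_abs_self Δ) hlam0.le
    have h2 : lam * |Δ| ≤ s0 / (|Δ| + 1) * |Δ| :=
      mul_le_mul_of_nonneg_right (min_le_right _ _) (abs_nonneg _)
    have h3 : s0 / (|Δ| + 1) * |Δ| ≤ s0 := by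
      rw [div_mul_eq_mul_div, div_le_iff₀ (by positivity)]
      nlinarith [abs_nonneg Δ]
    linarith
  set ℓ' : ℕ → ℝ := fun j => if j = i then (1 - lam) * ℓ i + lam * ℓ (i + 1)
    else if j = i + 1 then lam * ℓ i + (1 - lam) * ℓ (i + 1) else ℓ j with hl'
  set d' : ℕ → ℝ := fun j => if j = i then (1 - lam) * d i + lam * d (i + 1)
    else if j = i + 1 then lam * d i + (1 - lam) * d (i + 1) else d j with hd'
  have hl'i : ℓ' i = (1 - lam) * ℓ i + lam * ℓ (i + 1) := by simp [hl']
  have hl'i1 : ℓ' (i + 1) = lam * ℓ i + (1 - lam) * ℓ (i + 1) := by simp [hl', hii1']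
  have hd'i : d' i = (1 - lam) * d i + lam * d (i + 1) := by simp [hd']
  have hd'i1 : d' (i + 1) = lam * d i + (1 - lam) * d (i + 1) := by simp [hd', hii1']
  have hother : ∀ j, j ≠ i → j ≠ i + 1 → ℓ' j = ℓ j ∧ d' j = d j := by
    intro j hj1 hj2
    constructor <;> simp [hl', hd', hj1, hj2]
  have hsum : ∀ k : ℕ, ∑ j ∈ Finset.Icc 1 k, (ℓ' j + d' j)
      = ∑ j ∈ Finset.Icc 1 k, (ℓ j + d j)
        + ((if i ∈ Finset.Icc 1 k then lam * Δ else 0)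
          + (if i + 1 ∈ Finset.Icc 1 k then -(lam * Δ) else 0)) := by
    intro k
    have hpt : ∀ j ∈ Finset.Icc 1 k, ℓ' j + d' j
        = (ℓ j + d j) + ((if j = i then lam * Δ else 0)
          + (if j = i + 1 then -(lam * Δ) else 0)) := by
      intro j _
      by_cases h1 : j = i
      · subst h1
        rw [hl'i, hd'i, if_pos rfl, if_neg hii1, hΔ]
        ring
      · by_cases h2 : j = i + 1
        · subst h2
          rw [hl'i1, hd'i1, if_neg hii1', if_pos rfl, hΔ]
          ring
        · obtain ⟨e1, e2⟩ := hother j h1 h2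
          simp only [e1, e2, if_neg h1, if_neg h2]
          ring
    rw [Finset.sum_congr rfl hpt, Finset.sum_add_distrib, Finset.sum_add_distrib,
      Finset.sum_add_distrib, Finset.sum_ite_eq', Finset.sum_ite_eq']
  have hfeas' : FeasP21 N A ℓ' d' := by
    refine ⟨?_, ?_, ?_⟩
    · intro j hj
      obtain ⟨hℓi, hdi⟩ := hnn i hiN
      obtain ⟨hℓi1, hdi1⟩ := hnn (i + 1) hi1N
      obtain ⟨hℓj, hdj⟩ := hnn j hj
      by_cases h1 : j = i
      · subst h1
        rw [hl'i, hd'i]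
        exact ⟨add_nonneg (mul_nonneg (by linarith) hℓi) (mul_nonneg hlam0.le hℓi1),
          add_nonneg (mul_nonneg (by linarith) hdi) (mul_nonneg hlam0.le hdi1)⟩
      · by_cases h2 : j = i + 1
        · subst h2
          rw [hl'i1, hd'i1]
          exact ⟨add_nonneg (mul_nonneg hlam0.le hℓi) (mul_nonneg (by linarith) hℓi1),
            add_nonneg (mul_nonneg hlam0.le hdi) (mul_nonneg (by linarith) hdi1)⟩
        · obtain ⟨e1, e2⟩ := hother j h1 h2
          rw [e1, e2]
          exact ⟨hℓj, hdj⟩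
    · intro k hk
      rw [hsum k]
      by_cases h1 : i + 1 ≤ k
      · rw [if_pos (Finset.mem_Icc.mpr ⟨hi.1, by omega⟩),
          if_pos (Finset.mem_Icc.mpr ⟨by omega, h1⟩)]
        have := hcaus k hk
        linarith
      · by_cases h2 : i ≤ k
        · have hk_eq : k = i := by omega
          subst hk_eq
          rw [if_pos (Finset.mem_Icc.mpr ⟨hi.1, le_refl _⟩),
            if_neg (fun hmem => by rw [Finset.mem_Icc] at hmem; omega)]
          linarith
        · rw [if_neg (fun hmem => by rw [Finset.mem_Icc] at hmem; omega),
            if_neg (fun hmem => by rw [Finset.mem_Icc] at hmem; omega)]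
          have := hcaus k hk
          linarith
    · rw [hsum N, if_pos hiN, if_pos hi1N]
      linarith [hcomp]
  have hopt' := hopt ℓ' d' hfeas'
  have hηh : 0 < 1 / (η * h) := by positivity
  have hstrict : Eloc ζ C τ (ℓ' i) + Eoff τ σ2 g B (d' i)
      + (Eloc ζ C τ (ℓ' (i + 1)) + Eoff τ σ2 g B (d' (i + 1)))
      < Eloc ζ C τ (ℓ i) + Eoff τ σ2 g B (d i)
      + (Eloc ζ C τ (ℓ (i + 1)) + Eoff τ σ2 g B (d (i + 1))) := by
    rw [hl'i, hl'i1, hd'i, hd'i1]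
    obtain ⟨hℓi, hdi⟩ := hnn i hiN
    obtain ⟨hℓi1, hdi1⟩ := hnn (i + 1) hi1N
    by_cases hl : ℓ i = ℓ (i + 1)
    · have hd : d i ≠ d (i + 1) := hcon hl
      have hEoff := Eoff_pair_lt τ σ2 g B hτ hσ2 hg hB hd hlam0 hlam1
      have e1 : (1 - lam) * ℓ i + lam * ℓ (i + 1) = ℓ i := by rw [← hl]; ring
      have e2 : lam * ℓ i + (1 - lam) * ℓ (i + 1) = ℓ (i + 1) := by rw [← hl]; ring
      rw [e1, e2]
      linarith
    · have hEloc := Eloc_pair_lt ζ C τ hζ hC hτ hℓi hℓi1 hl hlam0 hlam1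
      by_cases hd : d i = d (i + 1)
      · have e1 : (1 - lam) * d i + lam * d (i + 1) = d i := by rw [← hd]; ring
        have e2 : lam * d i + (1 - lam) * d (i + 1) = d (i + 1) := by rw [← hd]; ring
        rw [e1, e2]
        linarith
      · have hEoff := Eoff_pair_lt τ σ2 g B hτ hσ2 hg hB hd hlam0 hlam1
        linarith
  have hlt : ∑ j ∈ Finset.Icc 1 N, 1 / (η * h) * (Eloc ζ C τ (ℓ' j) + Eoff τ σ2 g B (d' j))
      < ∑ j ∈ Finset.Icc 1 N, 1 / (η * h) * (Eloc ζ C τ (ℓ j) + Eoff τ σ2 g B (d j)) := by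
    have h1 := sum_split_pair (G := fun j => 1 / (η * h) * (Eloc ζ C τ (ℓ' j) + Eoff τ σ2 g B (d' j)))
      hii1 hiN hi1N
    have h2 := sum_split_pair (G := fun j => 1 / (η * h) * (Eloc ζ C τ (ℓ j) + Eoff τ σ2 g B (d j)))
      hii1 hiN hi1N
    rw [h1, h2]
    have heq : ∑ j ∈ Finset.Icc 1 N \ {i, i + 1},
        1 / (η * h) * (Eloc ζ C τ (ℓ' j) + Eoff τ σ2 g B (d' j))
        = ∑ j ∈ Finset.Icc 1 N \ {i, i + 1},
        1 / (η * h) * (Eloc ζ C τ (ℓ j) + Eoff τ σ2 g B (d j)) := by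
      refine Finset.sum_congr rfl (fun j hj => ?_)
      rw [Finset.mem_sdiff, Finset.mem_insert, Finset.mem_singleton] at hj
      push_neg at hj
      obtain ⟨e1, e2⟩ := hother j hj.2.1 hj.2.2
      rw [e1, e2]
    rw [heq]
    have := mul_lt_mul_of_pos_left hstrict hηh
    nlinarith [this]
  exact absurd hopt' (not_le.mpr hlt)
end

section
/- (Theorem 2.) Fix nonnegative per-slot consumptions e_1,…,e_N. Let φ_1 < φ_2 < … < φ_K enumerate the causality dominating slots (so φ_1 = 1), and set φ_{K+1} = N+1. Define p by p_{φ_k} = (1/(τ η h_{φ_k})) · Σ_{j=φ_k}^{φ_{k+1}−1} e_j for each k ∈ {1,…,K}, and p_i = 0 for every slot i that is not a causality dominating slot. Then p is nonnegative, satisfies the energy-causality constraints Σ_{j=1}^i e_j ≤ Σ_{j=1}^i τ η h_j p_j for every i ∈ {1,…,N}, and minimizes Σ_{i=1}^N τ p'_i among all nonnegative (p'_1,…,p'_N) satisfying those constraints. -/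
open Finset

/-- Slot `i` is a causality dominating slot (CDS) for channel gains `h` if `i = 1` or
the channel power gain at slot `i` strictly exceeds that at every earlier slot. -/
def IsCDS (h : ℕ → ℝ) (i : ℕ) : Prop :=
  i = 1 ∨ ∀ j, 1 ≤ j → j < i → h j < h i

/-- Abel-summation style auxiliary inequality. -/
lemma abel_aux (c A E : ℕ → ℝ) (K : ℕ)
    (hcmono : ∀ k, 1 ≤ k → k < K → c (k+1) ≤ c k)
    (hfeas : ∀ k, 1 ≤ k → k ≤ K → E k ≤ A k)
    (hA0 : A 0 = 0) (hE0 : E 0 = 0) :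
    ∀ m, 1 ≤ m → m ≤ K →
      ∑ k ∈ Finset.Icc 1 m, c k * (E k - E (k-1)) + c m * (A m - E m)
        ≤ ∑ k ∈ Finset.Icc 1 m, c k * (A k - A (k-1)) := by
  intro m
  induction m with
  | zero => intro h1 h2; omega
  | succ n ih =>
    intro h1 h2
    rcases Nat.eq_zero_or_pos n with rfl | hn
    · simp only [Finset.Icc_self, Finset.sum_singleton, hA0, hE0]
      ring_nf
      linarith
    · have hih := ih hn (by omega)
      rw [Finset.sum_Icc_succ_top (by omega : 1 ≤ n+1), Finset.sum_Icc_succ_top (by omega : 1 ≤ n+1)]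
      simp only [Nat.add_sub_cancel]
      have hmono := hcmono n hn (by omega)
      have hfe := hfeas n hn (by omega)
      have hprod : c (n+1) * (A n - E n) ≤ c n * (A n - E n) :=
        mul_le_mul_of_nonneg_right hmono (by linarith)
      linarith

/-- Theorem 2: the CDS-based energy allocation — transmitting only at causality
dominating slots, at each CDS exactly covering the consumption of the corresponding
CDS interval — is nonnegative, satisfies the energy-causality constraints, and
minimizes the total transmitted energy among all nonnegative feasible allocations. -/
theorem stmt_11
    (N : ℕ) (hN : 0 < N)
    (τ η : ℝ) (hτ : 0 < τ) (hη : 0 < η)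
    (h : ℕ → ℝ) (hpos : ∀ i ∈ Finset.Icc 1 N, 0 < h i)
    (e : ℕ → ℝ) (he : ∀ i ∈ Finset.Icc 1 N, 0 ≤ e i)
    (K : ℕ) (hK : 1 ≤ K) (φ : ℕ → ℕ)
    (hφmono : ∀ k l, 1 ≤ k → k < l → l ≤ K + 1 → φ k < φ l)
    (hφ1 : φ 1 = 1) (hφlast : φ (K + 1) = N + 1)
    (hφCDS : ∀ i ∈ Finset.Icc 1 N, (IsCDS h i ↔ ∃ k ∈ Finset.Icc 1 K, φ k = i))
    (p : ℕ → ℝ)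
    (hpCDS : ∀ k ∈ Finset.Icc 1 K,
      p (φ k) = 1 / (τ * η * h (φ k)) * ∑ j ∈ Finset.Icc (φ k) (φ (k + 1) - 1), e j)
    (hpzero : ∀ i ∈ Finset.Icc 1 N, ¬ IsCDS h i → p i = 0) :
    (∀ i ∈ Finset.Icc 1 N, 0 ≤ p i) ∧
    (∀ i ∈ Finset.Icc 1 N,
      ∑ j ∈ Finset.Icc 1 i, e j ≤ ∑ j ∈ Finset.Icc 1 i, τ * η * h j * p j) ∧
    (∀ p' : ℕ → ℝ, (∀ i ∈ Finset.Icc 1 N, 0 ≤ p' i) →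
      (∀ i ∈ Finset.Icc 1 N,
        ∑ j ∈ Finset.Icc 1 i, e j ≤ ∑ j ∈ Finset.Icc 1 i, τ * η * h j * p' j) →
      ∑ i ∈ Finset.Icc 1 N, τ * p i ≤ ∑ i ∈ Finset.Icc 1 N, τ * p' i) := by
  -- basic monotonicity facts about φ
  have hmono' : ∀ k l, 1 ≤ k → k ≤ l → l ≤ K + 1 → φ k ≤ φ l := by
    intro k l hk hkl hl
    rcases eq_or_lt_of_le hkl with rfl | hlt
    · exact le_rfl
    · exact (hφmono k l hk hlt hl).le
  have hφge1 : ∀ k, 1 ≤ k → k ≤ K + 1 → 1 ≤ φ k := by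
    intro k hk hk'
    have := hmono' 1 k le_rfl hk hk'
    omega
  have hφleN : ∀ k, 1 ≤ k → k ≤ K → φ k ≤ N := by
    intro k hk hk'
    have := hφmono k (K+1) hk (by omega) le_rfl
    omega
  have hbleN : ∀ k, 1 ≤ k → k ≤ K → φ (k+1) - 1 ≤ N := by
    intro k hk hk'
    have := hmono' (k+1) (K+1) (by omega) (by omega) le_rfl
    omega
  have hφlt_succ : ∀ k, 1 ≤ k → k ≤ K → φ k ≤ φ (k+1) - 1 := by
    intro k hk hk'
    have := hφmono k (k+1) hk (by omega) (by omega)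
    omega
  have hφrefl : ∀ k l, 1 ≤ k → k ≤ K + 1 → 1 ≤ l → l ≤ K + 1 → φ k < φ l → k < l := by
    intro k l hk1 hk2 hl1 hl2 hlt
    rcases lt_trichotomy k l with hh | rfl | hh
    · exact hh
    · omega
    · have := hφmono l k hl1 hh hk2; omega
  have hCDSφ : ∀ k, 1 ≤ k → k ≤ K → IsCDS h (φ k) := by
    intro k hk hk'
    have hmem : φ k ∈ Finset.Icc 1 N :=
      Finset.mem_Icc.mpr ⟨hφge1 k hk (by omega), hφleN k hk hk'⟩
    exact (hφCDS (φ k) hmem).mpr ⟨k, Finset.mem_Icc.mpr ⟨hk, hk'⟩, rfl⟩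
  have hnonCDS : ∀ k, 1 ≤ k → k ≤ K → ∀ j, φ k < j → j ≤ φ (k+1) - 1 → ¬ IsCDS h j := by
    intro k hk hk' j hj1 hj2 hcds
    have hg1 : 1 ≤ φ k := hφge1 k hk (by omega)
    have hg2 : φ (k+1) - 1 ≤ N := hbleN k hk hk'
    have hjmem : j ∈ Finset.Icc 1 N := Finset.mem_Icc.mpr ⟨by omega, by omega⟩
    obtain ⟨m, hm, hmj⟩ := (hφCDS j hjmem).mp hcds
    rw [Finset.mem_Icc] at hm
    have hs : φ k ≤ φ (k+1) - 1 := hφlt_succ k hk hk'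
    have hlt1 : k < m := hφrefl k m hk (by omega) hm.1 (by omega) (by omega)
    have hlt2 : m < k + 1 := hφrefl m (k+1) hm.1 (by omega) (by omega) (by omega) (by omega)
    omega
  have hpz : ∀ k, 1 ≤ k → k ≤ K → ∀ j, φ k < j → j ≤ φ (k+1) - 1 → p j = 0 := by
    intro k hk hk' j hj1 hj2
    have hg1 : 1 ≤ φ k := hφge1 k hk (by omega)
    exact hpzero j (Finset.mem_Icc.mpr ⟨by omega, le_trans hj2 (hbleN k hk hk')⟩)
      (hnonCDS k hk hk' j hj1 hj2)
  have hIcc0 : ∀ i : ℕ, Finset.Icc 1 i = Finset.Ioc 0 i := by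
    intro i; ext a; simp only [Finset.mem_Icc, Finset.mem_Ioc]; omega
  have hIccIoc : ∀ k, 1 ≤ k → k ≤ K →
      Finset.Icc (φ k) (φ (k+1) - 1) = Finset.Ioc (φ k - 1) (φ (k+1) - 1) := by
    intro k hk hk'
    have hg1 : 1 ≤ φ k := hφge1 k hk (by omega)
    ext a; simp only [Finset.mem_Icc, Finset.mem_Ioc]; omega
  -- h is dominated by the gain of the interval's CDS on each CDS interval
  have hhb : ∀ j k, 1 ≤ k → k ≤ K → φ k ≤ j → j ≤ φ (k+1) - 1 → h j ≤ h (φ k) := by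
    intro j
    induction j using Nat.strong_induction_on with
    | _ j ih =>
      intro k hk hk' hj1 hj2
      rcases eq_or_lt_of_le hj1 with heq | hlt
      · rw [← heq]
      · have hjN : j ≤ N := le_trans hj2 (hbleN k hk hk')
        have hnc := hnonCDS k hk hk' j hlt hj2
        have hg1 : 1 ≤ φ k := hφge1 k hk (by omega)
        rw [IsCDS] at hnc
        push_neg at hnc
        obtain ⟨hne1, j', hj'1, hj'2, hj'3⟩ := hnc
        rcases lt_or_ge j' (φ k) with hc | hc
        · rcases hCDSφ k hk hk' with heq1 | hall
          · omega
          · exact le_trans hj'3 (hall j' hj'1 hc).le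
        · exact le_trans hj'3 (ih j' hj'2 k hk hk' hc (by omega))
  have hcdsmono : ∀ k l, 1 ≤ k → k < l → l ≤ K → h (φ k) < h (φ l) := by
    intro k l hk hkl hl
    have hφkl : φ k < φ l := hφmono k l hk hkl (by omega)
    rcases hCDSφ l (by omega) hl with heq | hall
    · have := hφge1 k hk (by omega); omega
    · exact hall (φ k) (hφge1 k hk (by omega)) hφkl
  -- decomposition of an initial segment into CDS intervals
  have hsplit : ∀ m, 1 ≤ m → m ≤ K → ∀ f : ℕ → ℝ,
      ∑ i ∈ Finset.Ioc 0 (φ (m+1) - 1), f i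
        = ∑ k ∈ Finset.Icc 1 m, ∑ i ∈ Finset.Ioc (φ k - 1) (φ (k+1) - 1), f i := by
    intro m
    induction m with
    | zero => intro h1 h2; omega
    | succ n ih =>
      intro h1 h2 f
      rcases Nat.eq_zero_or_pos n with rfl | hn
      · have h0 : φ 1 - 1 = 0 := by rw [hφ1]
        simp [h0]
      · have hs := Finset.sum_Ioc_consecutive f (show (0:ℕ) ≤ φ (n+1) - 1 by omega)
          (show φ (n+1) - 1 ≤ φ (n+1+1) - 1 by
            have := hφmono (n+1) (n+1+1) (by omega) (by omega) (by omega); omega)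
        rw [Finset.sum_Icc_succ_top (by omega : 1 ≤ n + 1), ← ih hn (by omega) f, ← hs]
  have hhpos' : ∀ k, 1 ≤ k → k ≤ K → 0 < h (φ k) := fun k hk hk' =>
    hpos (φ k) (Finset.mem_Icc.mpr ⟨hφge1 k hk (by omega), hφleN k hk hk'⟩)
  -- a sum over a CDS interval only keeps the CDS slot, for functions vanishing on non-CDS slots
  have hsingle : ∀ k, 1 ≤ k → k ≤ K → ∀ q : ℕ → ℝ,
      (∀ j, φ k < j → j ≤ φ (k+1) - 1 → q j = 0) →
      ∑ i ∈ Finset.Ioc (φ k - 1) (φ (k+1) - 1), q i = q (φ k) := by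
    intro k hk hk' q hq
    have hg1 : 1 ≤ φ k := hφge1 k hk (by omega)
    have hg2 : φ k ≤ φ (k+1) - 1 := hφlt_succ k hk hk'
    refine Finset.sum_eq_single_of_mem (φ k) (Finset.mem_Ioc.mpr ⟨by omega, hg2⟩) ?_
    intro b hb hbne
    rw [Finset.mem_Ioc] at hb
    exact hq b (by omega) hb.2
  have hint1 : ∀ k, 1 ≤ k → k ≤ K →
      ∑ i ∈ Finset.Ioc (φ k - 1) (φ (k+1) - 1), (τ * η * h i * p i)
        = ∑ i ∈ Finset.Ioc (φ k - 1) (φ (k+1) - 1), e i := by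
    intro k hk hk'
    have hz : ∀ j, φ k < j → j ≤ φ (k+1) - 1 → τ * η * h j * p j = 0 := by
      intro j ha hb; rw [hpz k hk hk' j ha hb]; ring
    rw [hsingle k hk hk' _ hz, hpCDS k (Finset.mem_Icc.mpr ⟨hk, hk'⟩), hIccIoc k hk hk']
    have h0 : (0:ℝ) < h (φ k) := hhpos' k hk hk'
    field_simp
  have hint2 : ∀ k, 1 ≤ k → k ≤ K →
      ∑ i ∈ Finset.Ioc (φ k - 1) (φ (k+1) - 1), (τ * p i)
        = (1 / (η * h (φ k))) * ∑ i ∈ Finset.Ioc (φ k - 1) (φ (k+1) - 1), e i := by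
    intro k hk hk'
    have hz : ∀ j, φ k < j → j ≤ φ (k+1) - 1 → τ * p j = 0 := by
      intro j ha hb; rw [hpz k hk hk' j ha hb]; ring
    rw [hsingle k hk hk' _ hz, hpCDS k (Finset.mem_Icc.mpr ⟨hk, hk'⟩), hIccIoc k hk hk']
    have h0 : (0:ℝ) < h (φ k) := hhpos' k hk hk'
    field_simp
  have hcum : ∀ k, 1 ≤ k → k ≤ K →
      ∑ j ∈ Finset.Ioc 0 (φ (k+1) - 1), (τ * η * h j * p j)
        = ∑ j ∈ Finset.Ioc 0 (φ (k+1) - 1), e j := by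
    intro k hk hk'
    rw [hsplit k hk hk', hsplit k hk hk']
    refine Finset.sum_congr rfl ?_
    intro l hl
    rw [Finset.mem_Icc] at hl
    exact hint1 l hl.1 (le_trans hl.2 hk')
  -- Part 1: nonnegativity
  have part1 : ∀ i ∈ Finset.Icc 1 N, 0 ≤ p i := by
    intro i hi
    by_cases hc : IsCDS h i
    · obtain ⟨k, hkmem, rfl⟩ := (hφCDS i hi).mp hc
      rw [Finset.mem_Icc] at hkmem
      rw [hpCDS k (Finset.mem_Icc.mpr hkmem)]
      have h0 : (0:ℝ) < h (φ k) := hhpos' k hkmem.1 hkmem.2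
      apply mul_nonneg (by positivity)
      apply Finset.sum_nonneg
      intro j hj
      rw [Finset.mem_Icc] at hj
      have hg1 : 1 ≤ φ k := hφge1 k hkmem.1 (by omega)
      have hg2 : φ (k+1) - 1 ≤ N := hbleN k hkmem.1 hkmem.2
      exact he j (Finset.mem_Icc.mpr ⟨by omega, by omega⟩)
    · rw [hpzero i hi hc]
  -- Part 2: energy causality
  have part2 : ∀ i ∈ Finset.Icc 1 N,
      ∑ j ∈ Finset.Icc 1 i, e j ≤ ∑ j ∈ Finset.Icc 1 i, τ * η * h j * p j := by
    intro i hi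
    rw [Finset.mem_Icc] at hi
    rw [hIcc0 i]
    have h1T : 1 ∈ (Finset.Icc 1 K).filter (fun k => φ k ≤ i) :=
      Finset.mem_filter.mpr ⟨Finset.mem_Icc.mpr ⟨le_rfl, hK⟩, by rw [hφ1]; exact hi.1⟩
    set m := ((Finset.Icc 1 K).filter (fun k => φ k ≤ i)).max' ⟨1, h1T⟩ with hmdef
    have hmT : m ∈ (Finset.Icc 1 K).filter (fun k => φ k ≤ i) := Finset.max'_mem _ _
    obtain ⟨hmK, hmi⟩ := Finset.mem_filter.mp hmT
    rw [Finset.mem_Icc] at hmK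
    have hiub : i ≤ φ (m+1) - 1 := by
      rcases eq_or_lt_of_le hmK.2 with heq | hlt
      · rw [heq, hφlast]; omega
      · by_contra hcon
        push_neg at hcon
        have hmem : m + 1 ∈ (Finset.Icc 1 K).filter (fun k => φ k ≤ i) :=
          Finset.mem_filter.mpr ⟨Finset.mem_Icc.mpr ⟨by omega, by omega⟩, by omega⟩
        have := Finset.le_max' _ (m+1) hmem
        omega
    have hbN : φ (m+1) - 1 ≤ N := hbleN m hmK.1 hmK.2
    have hs1 := Finset.sum_Ioc_consecutive e (Nat.zero_le i) hiub
    have hs2 := Finset.sum_Ioc_consecutive (fun j => τ * η * h j * p j) (Nat.zero_le i) hiub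
    have htail0 : ∑ j ∈ Finset.Ioc i (φ (m+1) - 1), (τ * η * h j * p j) = 0 := by
      apply Finset.sum_eq_zero
      intro j hj
      rw [Finset.mem_Ioc] at hj
      rw [hpz m hmK.1 hmK.2 j (by omega) hj.2]; ring
    have htaile : 0 ≤ ∑ j ∈ Finset.Ioc i (φ (m+1) - 1), e j := by
      apply Finset.sum_nonneg
      intro j hj
      rw [Finset.mem_Ioc] at hj
      exact he j (Finset.mem_Icc.mpr ⟨by omega, by omega⟩)
    have hc := hcum m hmK.1 hmK.2
    linarith
  refine ⟨part1, part2, ?_⟩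
  -- Part 3: optimality
  intro p' hp'0 hp'c
  have hGbound : ∀ k ∈ Finset.Icc 1 K,
      (1 / (η * h (φ k))) * (∑ i ∈ Finset.Ioc (φ k - 1) (φ (k+1) - 1), (τ * η * h i * p' i))
        ≤ ∑ i ∈ Finset.Ioc (φ k - 1) (φ (k+1) - 1), (τ * p' i) := by
    intro k hkmem
    rw [Finset.mem_Icc] at hkmem
    obtain ⟨hk, hk'⟩ := hkmem
    rw [Finset.mul_sum]
    apply Finset.sum_le_sum
    intro i hi
    rw [Finset.mem_Ioc] at hi
    have hg1 : 1 ≤ φ k := hφge1 k hk (by omega)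
    have hiN : i ∈ Finset.Icc 1 N :=
      Finset.mem_Icc.mpr ⟨by omega, le_trans hi.2 (hbleN k hk hk')⟩
    have hhk := hhpos' k hk hk'
    have hhi := hpos i hiN
    have hpi := hp'0 i hiN
    have hhb' := hhb i k hk hk' (by omega) hi.2
    have key : τ * η * (h i * p' i) ≤ τ * η * (h (φ k) * p' i) := by
      apply mul_le_mul_of_nonneg_left _ (by positivity)
      exact mul_le_mul_of_nonneg_right hhb' hpi
    rw [one_div, inv_mul_le_iff₀ (by positivity)]
    nlinarith [key]
  -- block cumulative sums
  have hA0 : ∑ i ∈ Finset.Ioc 0 (φ (0+1) - 1), (τ * η * h i * p' i) = 0 := by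
    rw [show φ (0+1) - 1 = 0 by rw [hφ1]]
    simp
  have hE0 : ∑ i ∈ Finset.Ioc 0 (φ (0+1) - 1), e i = 0 := by
    rw [show φ (0+1) - 1 = 0 by rw [hφ1]]
    simp
  have hfeasb : ∀ k, 1 ≤ k → k ≤ K →
      ∑ i ∈ Finset.Ioc 0 (φ (k+1) - 1), e i
        ≤ ∑ i ∈ Finset.Ioc 0 (φ (k+1) - 1), (τ * η * h i * p' i) := by
    intro k hk hk'
    have h2 : φ k < φ (k+1) := hφmono k (k+1) hk (by omega) (by omega)
    have hg1 : 1 ≤ φ k := hφge1 k hk (by omega)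
    have := hp'c (φ (k+1) - 1) (Finset.mem_Icc.mpr ⟨by omega, hbleN k hk hk'⟩)
    rwa [hIcc0] at this
  have hcmono : ∀ k, 1 ≤ k → k < K →
      (1 / (η * h (φ (k+1)))) ≤ (1 / (η * h (φ k))) := by
    intro k hk hk'
    have hlt := hcdsmono k (k+1) hk (by omega) (by omega)
    have h1p := hhpos' k hk (by omega)
    apply one_div_le_one_div_of_le (by positivity)
    nlinarith
  have habel : ∑ k ∈ Finset.Icc 1 K,
        (1 / (η * h (φ k))) * ((∑ i ∈ Finset.Ioc 0 (φ (k+1) - 1), e i)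
          - ∑ i ∈ Finset.Ioc 0 (φ (k-1+1) - 1), e i)
      + (1 / (η * h (φ K))) * ((∑ i ∈ Finset.Ioc 0 (φ (K+1) - 1), (τ * η * h i * p' i))
          - ∑ i ∈ Finset.Ioc 0 (φ (K+1) - 1), e i)
      ≤ ∑ k ∈ Finset.Icc 1 K,
        (1 / (η * h (φ k))) * ((∑ i ∈ Finset.Ioc 0 (φ (k+1) - 1), (τ * η * h i * p' i))
          - ∑ i ∈ Finset.Ioc 0 (φ (k-1+1) - 1), (τ * η * h i * p' i)) :=
    abel_aux (fun k => 1 / (η * h (φ k)))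
      (fun k => ∑ i ∈ Finset.Ioc 0 (φ (k+1) - 1), (τ * η * h i * p' i))
      (fun k => ∑ i ∈ Finset.Ioc 0 (φ (k+1) - 1), e i)
      K hcmono hfeasb hA0 hE0 K hK le_rfl
  have hslack : 0 ≤ (1 / (η * h (φ K))) * ((∑ i ∈ Finset.Ioc 0 (φ (K+1) - 1), (τ * η * h i * p' i))
      - ∑ i ∈ Finset.Ioc 0 (φ (K+1) - 1), e i) := by
    have h1p := hhpos' K hK le_rfl
    have := hfeasb K hK le_rfl
    apply mul_nonneg (by positivity)
    linarith
  -- difference of block cumulative sums = interval sums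
  have hdiff : ∀ (f : ℕ → ℝ) (k : ℕ), 1 ≤ k → k ≤ K →
      (∑ i ∈ Finset.Ioc 0 (φ (k+1) - 1), f i) - ∑ i ∈ Finset.Ioc 0 (φ (k-1+1) - 1), f i
        = ∑ i ∈ Finset.Ioc (φ k - 1) (φ (k+1) - 1), f i := by
    intro f k hk hk'
    have hke : k - 1 + 1 = k := by omega
    rw [hke]
    have hg1 : 1 ≤ φ k := hφge1 k hk (by omega)
    have hg2 : φ k ≤ φ (k+1) - 1 := hφlt_succ k hk hk'
    have hs := Finset.sum_Ioc_consecutive f (show (0:ℕ) ≤ φ k - 1 by omega)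
      (show φ k - 1 ≤ φ (k+1) - 1 by omega)
    linarith
  -- assemble
  have hNb : φ (K+1) - 1 = N := by omega
  rw [hIcc0 N, ← hNb, hsplit K hK le_rfl, hsplit K hK le_rfl]
  have hL : ∑ k ∈ Finset.Icc 1 K, ∑ i ∈ Finset.Ioc (φ k - 1) (φ (k+1) - 1), (τ * p i)
      = ∑ k ∈ Finset.Icc 1 K,
        (1 / (η * h (φ k))) * ((∑ i ∈ Finset.Ioc 0 (φ (k+1) - 1), e i)
          - ∑ i ∈ Finset.Ioc 0 (φ (k-1+1) - 1), e i) := by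
    refine Finset.sum_congr rfl ?_
    intro k hk
    rw [Finset.mem_Icc] at hk
    rw [hdiff e k hk.1 hk.2]
    exact hint2 k hk.1 hk.2
  have hR : ∑ k ∈ Finset.Icc 1 K,
        (1 / (η * h (φ k))) * ((∑ i ∈ Finset.Ioc 0 (φ (k+1) - 1), (τ * η * h i * p' i))
          - ∑ i ∈ Finset.Ioc 0 (φ (k-1+1) - 1), (τ * η * h i * p' i))
      ≤ ∑ k ∈ Finset.Icc 1 K, ∑ i ∈ Finset.Ioc (φ k - 1) (φ (k+1) - 1), (τ * p' i) := by
    apply Finset.sum_le_sum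
    intro k hk
    rw [hdiff (fun i => τ * η * h i * p' i) k (Finset.mem_Icc.mp hk).1 (Finset.mem_Icc.mp hk).2]
    exact hGbound k hk
  rw [hL]
  linarith
end

section
/- Fix nonnegative reals e_1,…,e_N and nonnegative reals p_1,…,p_N satisfying the energy-causality constraints Σ_{j=1}^i e_j ≤ τ η Σ_{j=1}^i h_j p_j for every i ∈ {1,…,N}. Then Σ_{i=1}^N τ p_i ≥ Σ_{i=1}^N e_i/(η h'_i), where h'_i = max_{1 ≤ j ≤ i} h_j. -/
open Finset

private lemma key_abel (a c : ℕ → ℝ) :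
    ∀ n : ℕ, ∀ b : ℕ → ℝ, (∀ i < n, 0 ≤ b i) →
    (∀ i j : ℕ, i ≤ j → j < n → b j ≤ b i) →
    (∀ i < n, ∑ j ∈ range (i+1), a j ≤ ∑ j ∈ range (i+1), c j) →
    ∑ i ∈ range n, a i * b i ≤ ∑ i ∈ range n, c i * b i := by
  intro n
  induction n with
  | zero => intro b _ _ _; simp
  | succ n ih =>
    intro b hb0 hbmono hpart
    have key : ∀ f : ℕ → ℝ, ∑ i ∈ range (n+1), f i * b i
        = (∑ i ∈ range n, f i * (b i - b n)) + b n * ∑ i ∈ range (n+1), f i := by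
      intro f
      have h1 : ∑ i ∈ range n, f i * (b i - b n)
          = ∑ i ∈ range n, f i * b i - (∑ i ∈ range n, f i) * b n := by
        rw [Finset.sum_mul, ← Finset.sum_sub_distrib]
        apply Finset.sum_congr rfl
        intros; ring
      rw [h1, Finset.sum_range_succ, Finset.sum_range_succ (f := f)]
      ring
    rw [key a, key c]
    have main : ∑ i ∈ range n, a i * (b i - b n) ≤ ∑ i ∈ range n, c i * (b i - b n) := by
      apply ih
      · intro i hi
        have := hbmono i n (le_of_lt hi) (Nat.lt_succ_self n)
        linarith
      · intro i j hij hj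
        have := hbmono i j hij (hj.trans (Nat.lt_succ_self n))
        linarith
      · intro i hi
        exact hpart i (hi.trans (Nat.lt_succ_self n))
    have tail : b n * ∑ i ∈ range (n+1), a i ≤ b n * ∑ i ∈ range (n+1), c i := by
      have hbn : 0 ≤ b n := hb0 n (Nat.lt_succ_self n)
      exact mul_le_mul_of_nonneg_left (hpart n (Nat.lt_succ_self n)) hbn
    linarith

/-- Lower bound on the total transmitted energy of any causally feasible energy
allocation: `Σ τ p_i ≥ Σ e_i/(η h'_i)` with `h'_i = max_{1 ≤ j ≤ i} h_j`. -/
theorem stmt_13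
    (N : ℕ) (hN : 0 < N)
    (τ η : ℝ) (hτ : 0 < τ) (hη : 0 < η)
    (h : ℕ → ℝ) (hpos : ∀ i ∈ Finset.Icc 1 N, 0 < h i)
    (h' : ℕ → ℝ)
    (hh' : ∀ i ∈ Finset.Icc 1 N,
      (∃ j ∈ Finset.Icc 1 i, h' i = h j) ∧ ∀ j ∈ Finset.Icc 1 i, h j ≤ h' i)
    (e : ℕ → ℝ) (he : ∀ i ∈ Finset.Icc 1 N, 0 ≤ e i)
    (p : ℕ → ℝ) (hp : ∀ i ∈ Finset.Icc 1 N, 0 ≤ p i)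
    (hEC : ∀ i ∈ Finset.Icc 1 N,
      ∑ j ∈ Finset.Icc 1 i, e j ≤ τ * η * ∑ j ∈ Finset.Icc 1 i, h j * p j) :
    ∑ i ∈ Finset.Icc 1 N, e i / (η * h' i) ≤ ∑ i ∈ Finset.Icc 1 N, τ * p i := by
  have hmem : ∀ i < N, (1 + i) ∈ Finset.Icc 1 N := by
    intro i hi; simp [Finset.mem_Icc]; omega
  have hh'pos : ∀ i ∈ Finset.Icc 1 N, 0 < h' i := by
    intro i hi
    obtain ⟨⟨j, hj, hje⟩, _⟩ := hh' i hi
    rw [hje]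
    apply hpos
    simp only [Finset.mem_Icc] at hj hi ⊢
    omega
  have hh'mono : ∀ i j, i ∈ Finset.Icc 1 N → j ∈ Finset.Icc 1 N → i ≤ j →
      h' i ≤ h' j := by
    intro i j hi hj hij
    obtain ⟨⟨k, hk, hke⟩, _⟩ := hh' i hi
    obtain ⟨_, hub⟩ := hh' j hj
    rw [hke]
    apply hub
    simp only [Finset.mem_Icc] at hk ⊢
    omega
  have conv : ∀ (f : ℕ → ℝ) (M : ℕ), ∑ i ∈ Finset.Icc 1 M, f i
      = ∑ i ∈ Finset.range M, f (1 + i) := by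
    intro f M
    rw [show Finset.Icc 1 M = Finset.Ico 1 (M+1) by rw [Finset.Ico_add_one_right_eq_Icc],
      Finset.sum_Ico_eq_sum_range]
    simp
  rw [conv, conv]
  set a : ℕ → ℝ := fun i => e (1 + i) with ha
  set c : ℕ → ℝ := fun i => τ * η * (h (1 + i) * p (1 + i)) with hc
  set b : ℕ → ℝ := fun i => (η * h' (1 + i))⁻¹ with hb
  have step1 : ∑ i ∈ Finset.range N, e (1 + i) / (η * h' (1 + i))
      ≤ ∑ i ∈ Finset.range N, c i * b i := by
    have heq : ∀ i ∈ Finset.range N, e (1 + i) / (η * h' (1 + i)) = a i * b i := by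
      intro i hi
      simp [ha, hb, div_eq_mul_inv]
    rw [Finset.sum_congr rfl heq]
    apply key_abel
    · intro i hi
      have := hh'pos (1 + i) (hmem i hi)
      positivity
    · intro i j hij hj
      have hi : i < N := lt_of_le_of_lt hij hj
      have h1 := hh'pos (1 + i) (hmem i hi)
      have h2 := hh'pos (1 + j) (hmem j hj)
      apply inv_anti₀
      · positivity
      · have := hh'mono (1 + i) (1 + j) (hmem i hi) (hmem j hj) (by omega)
        nlinarith
    · intro i hi
      have hEC' := hEC (1 + i) (hmem i hi)
      rw [conv e (1 + i), conv (fun j => h j * p j) (1 + i)] at hEC'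
      rw [Finset.mul_sum] at hEC'
      simpa [ha, hc, Nat.add_comm 1 i] using hEC'
  apply step1.trans
  apply Finset.sum_le_sum
  intro i hi
  simp only [Finset.mem_range] at hi
  have hm := hmem i hi
  have hhp := hpos (1 + i) hm
  have hh'p := hh'pos (1 + i) hm
  have hpp := hp (1 + i) hm
  obtain ⟨_, hub⟩ := hh' (1 + i) hm
  have hle : h (1 + i) ≤ h' (1 + i) := by
    apply hub
    simp only [Finset.mem_Icc] at hm ⊢
    omega
  have hbpos : 0 < η * h' (1 + i) := by positivity
  simp only [hc, hb]
  rw [mul_inv_le_iff₀ hbpos]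
  have hrw : τ * η * (h (1 + i) * p (1 + i)) = τ * p (1 + i) * (η * h (1 + i)) := by ring
  rw [hrw]
  have hτp : 0 ≤ τ * p (1 + i) := by positivity
  exact mul_le_mul_of_nonneg_left (mul_le_mul_of_nonneg_left hle hη.le) hτp
end

section
/- (Sufficiency form of Theorem 3.) Let ω_1 ≤ ω_2 ≤ … ≤ ω_N be real numbers and define, for each i ∈ {1,…,N}, ℓ_i = τ·√(η h'_i · max(ω_i, 0)/(3 ζ C³)) and d_i = τ B · log₂( max( ω_i · B η h'_i g_i/(σ² ln 2), 1 ) ). Suppose (ℓ, d) satisfies the task-causality constraints Σ_{j=1}^i (ℓ_j + d_j) ≤ Σ_{j=1}^i A_j for every i ∈ {1,…,N−1} and the task-completion constraint Σ_{j=1}^N (ℓ_j + d_j) = Σ_{j=1}^N A_j, and suppose that for every i ∈ {1,…,N−1} with ω_i < ω_{i+1} the constraint at slot i is tight: Σ_{j=1}^i (ℓ_j + d_j) = Σ_{j=1}^i A_j. Then (ℓ, d) is an optimal solution of problem (P1.1). -/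
/-
Weak duality, with the `ω_i` as multipliers of the causality/completion constraints. Each slot
pair `(ℓ_i, d_i)` is the projected stationary point of the convex slot Lagrangian
`f_i(ℓ, d) - ω_i (ℓ + d)`, so the tangent inequality plus complementary slackness show that it
minimizes it over `ℓ, d ≥ 0`. It then remains to see `Σ ω_i x_i ≤ Σ ω_i x'_i` for the slot totals
`x = ℓ + d`, `x' = ℓ' + d'`. Summation by parts turns `Σ ω_i (x'_i - x_i)` into
`-Σ_{i<N} (ω_{i+1} - ω_i)(S'_i - S_i)` with `S, S'` the partial sums (which agree at `N`), and every
term is `≤ 0`: either `ω_{i+1} = ω_i`, or the constraint is tight and `S_i = Σ_{j≤i} A_j ≥ S'_i`.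
-/

open Finset

/-- Feasibility for problem (P1.1): nonnegativity, task causality, task completion. -/
def FeasP11 (N : ℕ) (A ℓ d : ℕ → ℝ) : Prop :=
  (∀ i ∈ Finset.Icc 1 N, 0 ≤ ℓ i ∧ 0 ≤ d i) ∧
  (∀ i ∈ Finset.Icc 1 (N - 1),
    ∑ j ∈ Finset.Icc 1 i, (ℓ j + d j) ≤ ∑ j ∈ Finset.Icc 1 i, A j) ∧
  ∑ j ∈ Finset.Icc 1 N, (ℓ j + d j) = ∑ j ∈ Finset.Icc 1 N, A j

open Real

lemma sub_mul_le_sub_mul_of_tangent {f : ℝ → ℝ} {s x k ω : ℝ}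
    (htan : f s + k * (x - s) ≤ f x) (hωk : ω ≤ k) (hslack : (k - ω) * s = 0) (hx : 0 ≤ x) :
    f s - ω * s ≤ f x - ω * x := by
  nlinarith [mul_nonneg (sub_nonneg.2 hωk) hx]

lemma cube_tangent_le {a s x : ℝ} (ha : 0 ≤ a) (hs : 0 ≤ s) (hx : 0 ≤ x) :
    a * s ^ 3 + 3 * a * s ^ 2 * (x - s) ≤ a * x ^ 3 := by
  nlinarith [mul_nonneg (mul_nonneg ha (sq_nonneg (x - s))) (by linarith : 0 ≤ x + 2 * s)]

lemma cube_sub_mul_le {a s ω x : ℝ} (ha : 0 < a) (hs : 0 ≤ s)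
    (hstat : 3 * a * s ^ 2 = max ω 0) (hx : 0 ≤ x) :
    a * s ^ 3 - ω * s ≤ a * x ^ 3 - ω * x := by
  have hslack : (max ω 0 - ω) * s = 0 := by
    rcases le_total 0 ω with hω | hω
    · rw [max_eq_left hω, sub_self, zero_mul]
    · rw [max_eq_right hω] at hstat
      have hs0 : s = 0 := by
        simpa using (mul_eq_zero.1 hstat).resolve_left (by positivity)
      rw [hs0, mul_zero]
  exact sub_mul_le_sub_mul_of_tangent (f := fun y ↦ a * y ^ 3)
    (hstat ▸ cube_tangent_le ha.le hs hx) (le_max_left _ _) hslack hx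

lemma two_rpow_tangent_le (u y : ℝ) :
    (2 : ℝ) ^ u + log 2 * 2 ^ u * (y - u) ≤ 2 ^ y := by
  rw [rpow_def_of_pos two_pos, rpow_def_of_pos two_pos]
  have hexp : exp (log 2 * u) * (log 2 * (y - u) + 1) ≤ exp (log 2 * u) * exp (log 2 * (y - u)) :=
    mul_le_mul_of_nonneg_left (add_one_le_exp _) (exp_nonneg _)
  rw [← exp_add, show log 2 * u + log 2 * (y - u) = log 2 * y by ring] at hexp
  linarith

lemma two_rpow_sub_mul_le {c T ω t x : ℝ} (hc : 0 < c) (hT : 0 < T) (hx : 0 ≤ x)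
    (ht : t = T * logb 2 (max (ω * T / (c * log 2)) 1)) :
    c * (2 ^ (t / T) - 1) - ω * t ≤ c * (2 ^ (x / T) - 1) - ω * x := by
  have hlog2 : 0 < log 2 := log_pos one_lt_two
  set M := max (ω * T / (c * log 2)) 1 with hM
  have hM1 : 1 ≤ M := le_max_right _ _
  have htM : (2 : ℝ) ^ (t / T) = M := by
    rw [ht, mul_div_cancel_left₀ _ hT.ne', rpow_logb two_pos (by norm_num) (by linarith)]
  have hωk : ω ≤ c * log 2 * M / T := by
    rw [le_div_iff₀ hT, ← div_le_iff₀' (by positivity)]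
    exact le_max_left _ _
  have hslack : (c * log 2 * M / T - ω) * t = 0 := by
    rcases le_total (ω * T / (c * log 2)) 1 with hle | hle
    · rw [ht, hM, max_eq_right hle, logb_one, mul_zero, mul_zero]
    · rw [hM, max_eq_left hle]
      field_simp
      ring
  refine sub_mul_le_sub_mul_of_tangent (f := fun y ↦ c * (2 ^ (y / T) - 1)) ?_ hωk hslack hx
  have htan := mul_le_mul_of_nonneg_left (two_rpow_tangent_le (t / T) (x / T)) hc.le
  rw [htM] at htan
  simp only [htM]
  field_simp at htan ⊢
  linarith

lemma eloc_sub_mul_le {ζ C τ η h ω s x : ℝ} (hζ : 0 < ζ) (hC : 0 < C) (hτ : 0 < τ)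
    (hη : 0 < η) (hh : 0 < h) (hx : 0 ≤ x)
    (hs : s = τ * √(η * h * max ω 0 / (3 * ζ * C ^ 3))) :
    1 / (η * h) * Eloc ζ C τ s - ω * s ≤ 1 / (η * h) * Eloc ζ C τ x - ω * x := by
  set a := ζ * C ^ 3 / (τ ^ 2 * (η * h)) with ha
  have hEloc : ∀ y, 1 / (η * h) * Eloc ζ C τ y = a * y ^ 3 := fun y ↦ by
    rw [Eloc, ha]; field_simp
  rw [hEloc, hEloc]
  refine cube_sub_mul_le (by positivity) (hs ▸ by positivity) ?_ hx
  rw [hs, mul_pow, sq_sqrt (by positivity), ha]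
  field_simp

lemma eoff_sub_mul_le {τ σ2 g B η h ω t x : ℝ} (hτ : 0 < τ) (hσ2 : 0 < σ2) (hg : 0 < g)
    (hB : 0 < B) (hη : 0 < η) (hh : 0 < h) (hx : 0 ≤ x)
    (ht : t = τ * B * logb 2 (max (ω * (B * η * h * g) / (σ2 * log 2)) 1)) :
    1 / (η * h) * Eoff τ σ2 g B t - ω * t ≤ 1 / (η * h) * Eoff τ σ2 g B x - ω * x := by
  set c := τ * σ2 / (g * (η * h)) with hc
  have hEoff : ∀ y, 1 / (η * h) * Eoff τ σ2 g B y = c * (2 ^ (y / (τ * B)) - 1) := fun y ↦ by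
    rw [Eoff, hc]; field_simp
  rw [hEoff, hEoff]
  refine two_rpow_sub_mul_le (by positivity) (by positivity) hx ?_
  rw [ht, hc]
  field_simp

lemma sum_Icc_one_mul_by_parts (ω x : ℕ → ℝ) (N : ℕ) :
    ∑ i ∈ Icc 1 N, ω i * x i = ω N * ∑ j ∈ Icc 1 N, x j
      - ∑ i ∈ Icc 1 (N - 1), (ω (i + 1) - ω i) * ∑ j ∈ Icc 1 i, x j := by
  induction N with
  | zero => simp
  | succ n ih =>
    rw [sum_Icc_succ_top (by omega), ih]
    rcases n with _ | m
    · simp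
    · simp only [Nat.add_sub_cancel]
      rw [sum_Icc_succ_top (show 1 ≤ m + 1 by omega)
          (fun i ↦ (ω (i + 1) - ω i) * ∑ j ∈ Icc 1 i, x j),
        sum_Icc_succ_top (show 1 ≤ m + 2 by omega) x]
      ring

lemma sum_mul_le_sum_mul_of_tight {ω x x' A : ℕ → ℝ} {N : ℕ}
    (hmono : ∀ i ∈ Icc 1 (N - 1), ω i ≤ ω (i + 1))
    (hle : ∀ i ∈ Icc 1 (N - 1), ∑ j ∈ Icc 1 i, x' j ≤ ∑ j ∈ Icc 1 i, A j)
    (htight : ∀ i ∈ Icc 1 (N - 1), ω i < ω (i + 1) →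
      ∑ j ∈ Icc 1 i, x j = ∑ j ∈ Icc 1 i, A j)
    (htotal : ∑ j ∈ Icc 1 N, x j = ∑ j ∈ Icc 1 N, x' j) :
    ∑ i ∈ Icc 1 N, ω i * x i ≤ ∑ i ∈ Icc 1 N, ω i * x' i := by
  rw [sum_Icc_one_mul_by_parts ω x, sum_Icc_one_mul_by_parts ω x', htotal]
  refine sub_le_sub_left (sum_le_sum fun i hi ↦ ?_) _
  rcases (hmono i hi).lt_or_eq with hlt | heq
  · exact mul_le_mul_of_nonneg_left ((hle i hi).trans_eq (htight i hi hlt).symm)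
      (sub_nonneg.2 hlt.le)
  · rw [heq, sub_self, zero_mul, zero_mul]

theorem stmt_14_general
    (N : ℕ)
    (τ η ζ C σ2 B : ℝ)
    (hτ : 0 < τ) (hη : 0 < η) (hζ : 0 < ζ) (hC : 0 < C) (hσ2 : 0 < σ2) (hB : 0 < B)
    (h g : ℕ → ℝ)
    (hhpos : ∀ i ∈ Finset.Icc 1 N, 0 < h i) (hgpos : ∀ i ∈ Finset.Icc 1 N, 0 < g i)
    (h' : ℕ → ℝ)
    (hh' : ∀ i ∈ Finset.Icc 1 N,
      (∃ j ∈ Finset.Icc 1 i, h' i = h j) ∧ ∀ j ∈ Finset.Icc 1 i, h j ≤ h' i)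
    (A : ℕ → ℝ)
    (ω : ℕ → ℝ) (hω : ∀ i ∈ Finset.Icc 1 (N - 1), ω i ≤ ω (i + 1))
    (ℓ d : ℕ → ℝ)
    (hℓ : ∀ i ∈ Finset.Icc 1 N,
      ℓ i = τ * Real.sqrt (η * h' i * max (ω i) 0 / (3 * ζ * C ^ 3)))
    (hd : ∀ i ∈ Finset.Icc 1 N,
      d i = τ * B * Real.logb 2 (max (ω i * (B * η * h' i * g i) / (σ2 * Real.log 2)) 1))
    (hfeas : FeasP11 N A ℓ d)
    (htight : ∀ i ∈ Finset.Icc 1 (N - 1), ω i < ω (i + 1) →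
      ∑ j ∈ Finset.Icc 1 i, (ℓ j + d j) = ∑ j ∈ Finset.Icc 1 i, A j) :
    ∀ ℓ' d' : ℕ → ℝ, FeasP11 N A ℓ' d' →
      ∑ i ∈ Finset.Icc 1 N, 1 / (η * h' i) * (Eloc ζ C τ (ℓ i) + Eoff τ σ2 (g i) B (d i))
        ≤ ∑ i ∈ Finset.Icc 1 N, 1 / (η * h' i) * (Eloc ζ C τ (ℓ' i) + Eoff τ σ2 (g i) B (d' i)) := by
  intro ℓ' d' hfeas'
  have h'pos : ∀ i ∈ Icc 1 N, 0 < h' i := by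
    intro i hi
    obtain ⟨j, hj, hij⟩ := (hh' i hi).1
    rw [hij]
    exact hhpos j (by simp only [mem_Icc] at hi hj ⊢; omega)
  have hslot : ∀ i ∈ Icc 1 N,
      1 / (η * h' i) * (Eloc ζ C τ (ℓ i) + Eoff τ σ2 (g i) B (d i)) - ω i * (ℓ i + d i)
        ≤ 1 / (η * h' i) * (Eloc ζ C τ (ℓ' i) + Eoff τ σ2 (g i) B (d' i))
          - ω i * (ℓ' i + d' i) := by
    intro i hi
    have hloc := eloc_sub_mul_le hζ hC hτ hη (h'pos i hi) (hfeas'.1 i hi).1 (hℓ i hi)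
    have hoff := eoff_sub_mul_le hτ hσ2 (hgpos i hi) hB hη (h'pos i hi) (hfeas'.1 i hi).2 (hd i hi)
    linarith
  have hweights : ∑ i ∈ Icc 1 N, ω i * (ℓ i + d i) ≤ ∑ i ∈ Icc 1 N, ω i * (ℓ' i + d' i) :=
    sum_mul_le_sum_mul_of_tight (x := fun j ↦ ℓ j + d j) (x' := fun j ↦ ℓ' j + d' j) hω
      hfeas'.2.1 htight (hfeas.2.2.trans hfeas'.2.2.symm)
  have hsum := sum_le_sum hslot
  rw [sum_sub_distrib, sum_sub_distrib] at hsum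
  linarith

/-- Sufficiency form of Theorem 3: a feasible allocation of the stated closed form,
driven by nondecreasing computation levels `ω` whose increase slots have tight task
causality, is optimal for (P1.1). -/
theorem stmt_14
    (N : ℕ) (hN : 0 < N)
    (τ η ζ C σ2 B : ℝ)
    (hτ : 0 < τ) (hη : 0 < η) (hζ : 0 < ζ) (hC : 0 < C) (hσ2 : 0 < σ2) (hB : 0 < B)
    (h g : ℕ → ℝ)
    (hhpos : ∀ i ∈ Finset.Icc 1 N, 0 < h i) (hgpos : ∀ i ∈ Finset.Icc 1 N, 0 < g i)
    (h' : ℕ → ℝ)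
    (hh' : ∀ i ∈ Finset.Icc 1 N,
      (∃ j ∈ Finset.Icc 1 i, h' i = h j) ∧ ∀ j ∈ Finset.Icc 1 i, h j ≤ h' i)
    (A : ℕ → ℝ) (hA : ∀ i ∈ Finset.Icc 1 N, 0 ≤ A i)
    (ω : ℕ → ℝ) (hω : ∀ i ∈ Finset.Icc 1 (N - 1), ω i ≤ ω (i + 1))
    (ℓ d : ℕ → ℝ)
    (hℓ : ∀ i ∈ Finset.Icc 1 N,
      ℓ i = τ * Real.sqrt (η * h' i * max (ω i) 0 / (3 * ζ * C ^ 3)))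
    (hd : ∀ i ∈ Finset.Icc 1 N,
      d i = τ * B * Real.logb 2 (max (ω i * (B * η * h' i * g i) / (σ2 * Real.log 2)) 1))
    (hfeas : FeasP11 N A ℓ d)
    (htight : ∀ i ∈ Finset.Icc 1 (N - 1), ω i < ω (i + 1) →
      ∑ j ∈ Finset.Icc 1 i, (ℓ j + d j) = ∑ j ∈ Finset.Icc 1 i, A j) :
    ∀ ℓ' d' : ℕ → ℝ, FeasP11 N A ℓ' d' →
      ∑ i ∈ Finset.Icc 1 N, 1 / (η * h' i) * (Eloc ζ C τ (ℓ i) + Eoff τ σ2 (g i) B (d i))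
        ≤ ∑ i ∈ Finset.Icc 1 N, 1 / (η * h' i) * (Eloc ζ C τ (ℓ' i) + Eoff τ σ2 (g i) B (d' i)) :=
  stmt_14_general N τ η ζ C σ2 B hτ hη hζ hC hσ2 hB h g hhpos hgpos h' hh' A ω hω ℓ d hℓ hd hfeas
    htight
end

section
/- (First property of Proposition 2.) Every optimal solution (ℓ, d) of problem (P1.1) has nondecreasing local-computing allocation: ℓ_1 ≤ ℓ_2 ≤ … ≤ ℓ_N. -/
open Finset

/-! If `ℓ_{i+1} < ℓ_i` at an optimum, move half the gap from slot `i` to slot `i + 1`. Postponing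
work keeps every causality constraint, and since the weights `1/(η h'_k)` are nonincreasing and
the local cost is strictly convex and increasing, the objective strictly drops. -/

lemma Finset.sum_eq_sum_add_sub_add_sub {ι M : Type*} [AddCommGroup M] {s : Finset ι} {i j : ι}
    (hi : i ∈ s) (hj : j ∈ s) (hij : i ≠ j) {F G : ι → M}
    (h : ∀ k ∈ s, k ≠ i → k ≠ j → F k = G k) :
    ∑ k ∈ s, F k = ∑ k ∈ s, G k + ((F i - G i) + (F j - G j)) := by
  rw [← sub_eq_iff_eq_add', ← sum_sub_distrib]
  exact sum_eq_add i j hij (fun k hk hne => sub_eq_zero.2 (h k hk hne.1 hne.2))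
    (absurd hi) (absurd hj)

lemma StrictConvexOn.const_mul {s : Set ℝ} {f : ℝ → ℝ} (hf : StrictConvexOn ℝ s f) {K : ℝ}
    (hK : 0 < K) : StrictConvexOn ℝ s (fun x => K * f x) :=
  ⟨hf.1, fun _ hx _ hy hxy _ _ ha hb hab => by
    simpa only [smul_eq_mul, mul_add, mul_left_comm K] using
      mul_lt_mul_of_pos_left (hf.2 hx hy hxy ha hb hab) hK⟩

lemma StrictConvexOn.weighted_midpoint_lt {f : ℝ → ℝ} (hf : StrictConvexOn ℝ (Set.Ici 0) f)
    (hmono : MonotoneOn f (Set.Ici 0)) {wi wj a b : ℝ} (hwj : 0 < wj) (hw : wj ≤ wi)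
    (hb : 0 ≤ b) (hba : b < a) :
    wi * f ((a + b) / 2) + wj * f ((a + b) / 2) < wi * f a + wj * f b := by
  have hmid : f ((a + b) / 2) < (f a + f b) / 2 := by
    have := hf.2 (Set.mem_Ici.2 (hb.trans hba.le)) (Set.mem_Ici.2 hb) hba.ne'
      (by norm_num : (0 : ℝ) < 1 / 2) (by norm_num : (0 : ℝ) < 1 / 2) (by norm_num)
    rw [smul_eq_mul, smul_eq_mul, smul_eq_mul, smul_eq_mul] at this
    rw [show (a + b) / 2 = 1 / 2 * a + 1 / 2 * b by ring]
    linarith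
  have hfa : f ((a + b) / 2) ≤ f a :=
    hmono (Set.mem_Ici.2 (by linarith)) (Set.mem_Ici.2 (by linarith)) (by linarith)
  linarith [mul_le_mul_of_nonneg_right hw (sub_nonneg.2 hfa), mul_lt_mul_of_pos_left hmid hwj]

lemma strictConvexOn_Eloc {ζ C τ : ℝ} (hζ : 0 < ζ) (hC : 0 < C) (hτ : 0 < τ) :
    StrictConvexOn ℝ (Set.Ici 0) (Eloc ζ C τ) := by
  have hK : 0 < ζ * C ^ 3 / τ ^ 2 := by positivity
  refine ((strictConvexOn_pow (n := 3) (by norm_num)).const_mul hK).congr fun x _ => ?_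
  simp only [Eloc]
  ring

lemma monotoneOn_Eloc {ζ C τ : ℝ} (hζ : 0 < ζ) (hC : 0 < C) :
    MonotoneOn (Eloc ζ C τ) (Set.Ici 0) := fun x hx y _ hxy => by
  unfold Eloc
  gcongr

def moveLoad (ℓ : ℕ → ℝ) (i j : ℕ) (c : ℝ) : ℕ → ℝ :=
  ℓ - Pi.single i c + Pi.single j c

lemma moveLoad_of_ne {ℓ : ℕ → ℝ} {i j k : ℕ} {c : ℝ} (hi : k ≠ i) (hj : k ≠ j) :
    moveLoad ℓ i j c k = ℓ k := by
  simp [moveLoad, hi, hj]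

lemma moveLoad_left {ℓ : ℕ → ℝ} {i j : ℕ} {c : ℝ} (hij : i ≠ j) :
    moveLoad ℓ i j c i = ℓ i - c := by
  simp [moveLoad, hij]

lemma moveLoad_right {ℓ : ℕ → ℝ} {i j : ℕ} {c : ℝ} (hij : i ≠ j) :
    moveLoad ℓ i j c j = ℓ j + c := by
  simp [moveLoad, hij.symm]

lemma sum_moveLoad (ℓ : ℕ → ℝ) (i j : ℕ) (c : ℝ) (s : Finset ℕ) :
    ∑ k ∈ s, moveLoad ℓ i j c k =
      ∑ k ∈ s, ℓ k - (if i ∈ s then c else 0) + (if j ∈ s then c else 0) := by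
  simp only [moveLoad, Pi.add_apply, Pi.sub_apply, sum_add_distrib, sum_sub_distrib,
    sum_pi_single']

lemma sum_Icc_moveLoad_add_le {ℓ d : ℕ → ℝ} {i j : ℕ} {c : ℝ} (hi : 1 ≤ i) (hij : i < j)
    (hc : 0 ≤ c) (n : ℕ) :
    ∑ k ∈ Icc 1 n, (moveLoad ℓ i j c k + d k) ≤ ∑ k ∈ Icc 1 n, (ℓ k + d k) := by
  rw [sum_add_distrib, sum_add_distrib, sum_moveLoad]
  by_cases hj : j ≤ n
  · simp [mem_Icc, hi, hj, hij.le.trans hj, hi.trans hij.le]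
  · by_cases hin : i ≤ n <;> simp [mem_Icc, hi, hj, hin]
    linarith

lemma sum_Icc_moveLoad_add_eq {ℓ d : ℕ → ℝ} {i j n : ℕ} {c : ℝ} (hi : 1 ≤ i) (hij : i < j)
    (hjn : j ≤ n) :
    ∑ k ∈ Icc 1 n, (moveLoad ℓ i j c k + d k) = ∑ k ∈ Icc 1 n, (ℓ k + d k) := by
  rw [sum_add_distrib, sum_add_distrib, sum_moveLoad]
  simp [mem_Icc, hi, hjn, hij.le.trans hjn, hi.trans hij.le]

lemma FeasP11.moveLoad {N : ℕ} {A ℓ d : ℕ → ℝ} (hfeas : FeasP11 N A ℓ d) {i j : ℕ} {c : ℝ}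
    (hi : 1 ≤ i) (hij : i < j) (hjN : j ≤ N) (hc : 0 ≤ c) (hcℓ : c ≤ ℓ i) :
    FeasP11 N A (moveLoad ℓ i j c) d := by
  obtain ⟨hnonneg, hcaus, htotal⟩ := hfeas
  refine ⟨fun k hk => ⟨?_, (hnonneg k hk).2⟩,
    fun k hk => (sum_Icc_moveLoad_add_le hi hij hc k).trans (hcaus k hk),
    (sum_Icc_moveLoad_add_eq hi hij hjN).trans htotal⟩
  by_cases hki : k = i
  · rw [hki, moveLoad_left hij.ne]
    linarith
  by_cases hkj : k = j
  · rw [hkj, moveLoad_right hij.ne]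
    linarith [(hnonneg j (mem_Icc.2 ⟨hi.trans hij.le, hjN⟩)).1]
  rw [moveLoad_of_ne hki hkj]
  exact (hnonneg k hk).1

lemma sum_weighted_moveLoad_half_gap_lt {f : ℝ → ℝ} (hf : StrictConvexOn ℝ (Set.Ici 0) f)
    (hmono : MonotoneOn f (Set.Ici 0)) {s : Finset ℕ} {w e ℓ : ℕ → ℝ} {i j : ℕ}
    (hi : i ∈ s) (hj : j ∈ s) (hij : i ≠ j) (hwj : 0 < w j) (hw : w j ≤ w i)
    (hℓj : 0 ≤ ℓ j) (hlt : ℓ j < ℓ i) :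
    ∑ k ∈ s, w k * (f (moveLoad ℓ i j ((ℓ i - ℓ j) / 2) k) + e k)
      < ∑ k ∈ s, w k * (f (ℓ k) + e k) := by
  rw [sum_eq_sum_add_sub_add_sub hi hj hij fun k _ hki hkj => by rw [moveLoad_of_ne hki hkj],
    moveLoad_left hij, moveLoad_right hij]
  have hi_mid : ℓ i - (ℓ i - ℓ j) / 2 = (ℓ i + ℓ j) / 2 := by ring
  have hj_mid : ℓ j + (ℓ i - ℓ j) / 2 = (ℓ i + ℓ j) / 2 := by ring
  rw [hi_mid, hj_mid]
  linarith [hf.weighted_midpoint_lt hmono hwj hw hℓj hlt]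

lemma le_effectiveGain_succ {N : ℕ} {h h' : ℕ → ℝ}
    (hh' : ∀ i ∈ Icc 1 N, (∃ j ∈ Icc 1 i, h' i = h j) ∧ ∀ j ∈ Icc 1 i, h j ≤ h' i)
    {i : ℕ} (hi : 1 ≤ i) (hiN : i + 1 ≤ N) : h' i ≤ h' (i + 1) := by
  obtain ⟨j, hj, hj_eq⟩ := (hh' i (mem_Icc.2 ⟨hi, by omega⟩)).1
  rw [hj_eq]
  exact (hh' (i + 1) (mem_Icc.2 ⟨by omega, hiN⟩)).2 j (mem_Icc.2 ⟨(mem_Icc.1 hj).1, by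
    linarith [(mem_Icc.1 hj).2]⟩)

lemma effectiveGain_pos {N : ℕ} {h h' : ℕ → ℝ} (hhpos : ∀ i ∈ Icc 1 N, 0 < h i)
    (hh' : ∀ i ∈ Icc 1 N, (∃ j ∈ Icc 1 i, h' i = h j) ∧ ∀ j ∈ Icc 1 i, h j ≤ h' i)
    {i : ℕ} (hi : i ∈ Icc 1 N) : 0 < h' i := by
  obtain ⟨j, hj, hj_eq⟩ := (hh' i hi).1
  rw [hj_eq]
  exact hhpos j (mem_Icc.2 ⟨(mem_Icc.1 hj).1, (mem_Icc.1 hj).2.trans (mem_Icc.1 hi).2⟩)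

theorem stmt_16_general
    (N : ℕ)
    (τ η ζ C σ2 B : ℝ)
    (hτ : 0 < τ) (hη : 0 < η) (hζ : 0 < ζ) (hC : 0 < C)
    (h g : ℕ → ℝ)
    (hhpos : ∀ i ∈ Finset.Icc 1 N, 0 < h i)
    (h' : ℕ → ℝ)
    (hh' : ∀ i ∈ Finset.Icc 1 N,
      (∃ j ∈ Finset.Icc 1 i, h' i = h j) ∧ ∀ j ∈ Finset.Icc 1 i, h j ≤ h' i)
    (A : ℕ → ℝ)
    (ℓ d : ℕ → ℝ)
    (hfeas : FeasP11 N A ℓ d)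
    (hopt : ∀ ℓ' d' : ℕ → ℝ, FeasP11 N A ℓ' d' →
      ∑ i ∈ Finset.Icc 1 N, 1 / (η * h' i) * (Eloc ζ C τ (ℓ i) + Eoff τ σ2 (g i) B (d i))
        ≤ ∑ i ∈ Finset.Icc 1 N, 1 / (η * h' i) * (Eloc ζ C τ (ℓ' i) + Eoff τ σ2 (g i) B (d' i))) :
    ∀ i ∈ Finset.Icc 1 (N - 1), ℓ i ≤ ℓ (i + 1) := by
  intro i hi
  obtain ⟨hi1, hiN⟩ : 1 ≤ i ∧ i + 1 ≤ N := by rw [mem_Icc] at hi; omega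
  have hmem : i ∈ Icc 1 N := mem_Icc.2 ⟨hi1, by omega⟩
  have hmem_succ : i + 1 ∈ Icc 1 N := mem_Icc.2 ⟨by omega, hiN⟩
  by_contra! hlt
  have hℓ_succ : 0 ≤ ℓ (i + 1) := (hfeas.1 (i + 1) hmem_succ).1
  have hfeas' := hfeas.moveLoad (c := (ℓ i - ℓ (i + 1)) / 2) hi1 (Nat.lt_succ_self i) hiN
    (by linarith) (by linarith)
  have hgain_pos := effectiveGain_pos hhpos hh' hmem
  have hweight : 1 / (η * h' (i + 1)) ≤ 1 / (η * h' i) :=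
    one_div_le_one_div_of_le (by positivity) (by gcongr; exact le_effectiveGain_succ hh' hi1 hiN)
  have hweight_pos : 0 < 1 / (η * h' (i + 1)) := by
    have := effectiveGain_pos hhpos hh' hmem_succ
    positivity
  have hdrop := sum_weighted_moveLoad_half_gap_lt (strictConvexOn_Eloc hζ hC hτ)
    (monotoneOn_Eloc hζ hC) (w := fun k => 1 / (η * h' k)) (e := fun k => Eoff τ σ2 (g k) B (d k))
    hmem hmem_succ (Nat.lt_succ_self i).ne hweight_pos hweight hℓ_succ hlt
  exact (hdrop.trans_le (hopt _ d hfeas')).false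

/-- First property of Proposition 2: every optimal solution of (P1.1) has
nondecreasing local-computing allocation. -/
theorem stmt_16
    (N : ℕ) (hN : 0 < N)
    (τ η ζ C σ2 B : ℝ)
    (hτ : 0 < τ) (hη : 0 < η) (hζ : 0 < ζ) (hC : 0 < C) (hσ2 : 0 < σ2) (hB : 0 < B)
    (h g : ℕ → ℝ)
    (hhpos : ∀ i ∈ Finset.Icc 1 N, 0 < h i) (hgpos : ∀ i ∈ Finset.Icc 1 N, 0 < g i)
    (h' : ℕ → ℝ)
    (hh' : ∀ i ∈ Finset.Icc 1 N,
      (∃ j ∈ Finset.Icc 1 i, h' i = h j) ∧ ∀ j ∈ Finset.Icc 1 i, h j ≤ h' i)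
    (A : ℕ → ℝ) (hA : ∀ i ∈ Finset.Icc 1 N, 0 ≤ A i)
    (ℓ d : ℕ → ℝ)
    (hfeas : FeasP11 N A ℓ d)
    (hopt : ∀ ℓ' d' : ℕ → ℝ, FeasP11 N A ℓ' d' →
      ∑ i ∈ Finset.Icc 1 N, 1 / (η * h' i) * (Eloc ζ C τ (ℓ i) + Eoff τ σ2 (g i) B (d i))
        ≤ ∑ i ∈ Finset.Icc 1 N, 1 / (η * h' i) * (Eloc ζ C τ (ℓ' i) + Eoff τ σ2 (g i) B (d' i))) :
    ∀ i ∈ Finset.Icc 1 (N - 1), ℓ i ≤ ℓ (i + 1) :=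
  stmt_16_general N τ η ζ C σ2 B hτ hη hζ hC h g hhpos h' hh' A ℓ d hfeas hopt
end

section
/- (Optimality of the water-filling solution of subproblem (21).) Let ω ≥ 0 and define, for each i ∈ {1,…,N}, ℓ_i = τ·√(η h'_i · ω/(3 ζ C³)) and d_i = τ B · log₂( max( ω · B η h'_i g_i/(σ² ln 2), 1 ) ). Then (ℓ, d) minimizes Σ_{i=1}^N (1/(η h'_i))(E_loc(ℓ'_i) + E_off_i(d'_i)) among all nonnegative (ℓ', d') with Σ_{i=1}^N (ℓ'_i + d'_i) = Σ_{i=1}^N (ℓ_i + d_i). -/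
open Finset

lemma cube_grad (a x y : ℝ) (ha : 0 ≤ a) (hx : 0 ≤ x) (hy : 0 ≤ y) :
    a * y ^ 3 + 3 * a * y ^ 2 * (x - y) ≤ a * x ^ 3 := by
  nlinarith [mul_nonneg (mul_nonneg ha (sq_nonneg (x - y))) (by linarith : (0:ℝ) ≤ x + 2 * y)]

lemma rpow_grad (u v : ℝ) :
    (2:ℝ) ^ u + Real.log 2 * (2:ℝ) ^ u * (v - u) ≤ (2:ℝ) ^ v := by
  have h2 : (0:ℝ) < 2 := two_pos
  rw [Real.rpow_def_of_pos h2, Real.rpow_def_of_pos h2]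
  have h := Real.add_one_le_exp (Real.log 2 * v - Real.log 2 * u)
  have hpos : 0 < Real.exp (Real.log 2 * u) := Real.exp_pos _
  have heq : Real.exp (Real.log 2 * v) =
      Real.exp (Real.log 2 * u) * Real.exp (Real.log 2 * v - Real.log 2 * u) := by
    rw [← Real.exp_add]; ring_nf
  nlinarith [mul_le_mul_of_nonneg_left h hpos.le]

set_option maxHeartbeats 800000 in
/-- Optimality of the water-filling solution of subproblem (21): for any common
computation level `ω ≥ 0`, the closed-form allocation minimizes the weighted sum
energy among all nonnegative allocations executing the same total number of
task input-bits. -/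
theorem stmt_17
    (N : ℕ) (hN : 0 < N)
    (τ η ζ C σ2 B : ℝ)
    (hτ : 0 < τ) (hη : 0 < η) (hζ : 0 < ζ) (hC : 0 < C) (hσ2 : 0 < σ2) (hB : 0 < B)
    (h g : ℕ → ℝ)
    (hhpos : ∀ i ∈ Finset.Icc 1 N, 0 < h i) (hgpos : ∀ i ∈ Finset.Icc 1 N, 0 < g i)
    (h' : ℕ → ℝ)
    (hh' : ∀ i ∈ Finset.Icc 1 N,
      (∃ j ∈ Finset.Icc 1 i, h' i = h j) ∧ ∀ j ∈ Finset.Icc 1 i, h j ≤ h' i)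
    (ω : ℝ) (hω : 0 ≤ ω)
    (ℓ d : ℕ → ℝ)
    (hℓ : ∀ i ∈ Finset.Icc 1 N,
      ℓ i = τ * Real.sqrt (η * h' i * ω / (3 * ζ * C ^ 3)))
    (hd : ∀ i ∈ Finset.Icc 1 N,
      d i = τ * B * Real.logb 2 (max (ω * (B * η * h' i * g i) / (σ2 * Real.log 2)) 1)) :
    ∀ ℓ' d' : ℕ → ℝ, (∀ i ∈ Finset.Icc 1 N, 0 ≤ ℓ' i ∧ 0 ≤ d' i) →
      ∑ i ∈ Finset.Icc 1 N, (ℓ' i + d' i) = ∑ i ∈ Finset.Icc 1 N, (ℓ i + d i) →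
      ∑ i ∈ Finset.Icc 1 N, 1 / (η * h' i) * (Eloc ζ C τ (ℓ i) + Eoff τ σ2 (g i) B (d i))
        ≤ ∑ i ∈ Finset.Icc 1 N, 1 / (η * h' i) * (Eloc ζ C τ (ℓ' i) + Eoff τ σ2 (g i) B (d' i)) := by
  intro ℓ' d' hnn hsum
  have hl2 : 0 < Real.log 2 := Real.log_pos one_lt_two
  have key : ∀ i ∈ Finset.Icc 1 N,
      1 / (η * h' i) * (Eloc ζ C τ (ℓ i) + Eoff τ σ2 (g i) B (d i))
        + ω * ((ℓ' i + d' i) - (ℓ i + d i))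
      ≤ 1 / (η * h' i) * (Eloc ζ C τ (ℓ' i) + Eoff τ σ2 (g i) B (d' i)) := by
    intro i hi
    obtain ⟨hi1, hiN⟩ := Finset.mem_Icc.mp hi
    have hH : 0 < h' i := by
      obtain ⟨⟨j, hj, hje⟩, _⟩ := hh' i hi
      obtain ⟨hj1, hji⟩ := Finset.mem_Icc.mp hj
      rw [hje]
      exact hhpos j (Finset.mem_Icc.mpr ⟨hj1, hji.trans hiN⟩)
    have hgi : 0 < g i := hgpos i hi
    obtain ⟨hℓ'nn, hd'nn⟩ := hnn i hi
    have hℓi := hℓ i hi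
    have hdi := hd i hi
    -- local-computing part
    set a : ℝ := 1 / (η * h' i) * (ζ * C ^ 3 / τ ^ 2) with ha_def
    have ha : 0 < a := by rw [ha_def]; positivity
    have hℓnn : 0 ≤ ℓ i := by rw [hℓi]; positivity
    have hsq : (ℓ i) ^ 2 = τ ^ 2 * (η * h' i * ω / (3 * ζ * C ^ 3)) := by
      rw [hℓi, mul_pow, Real.sq_sqrt (by positivity)]
    have hωeq : ω = 3 * a * (ℓ i) ^ 2 := by
      rw [ha_def, hsq]
      field_simp
    have hA : 1 / (η * h' i) * Eloc ζ C τ (ℓ i) + ω * (ℓ' i - ℓ i)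
        ≤ 1 / (η * h' i) * Eloc ζ C τ (ℓ' i) := by
      have e1 : 1 / (η * h' i) * Eloc ζ C τ (ℓ i) = a * (ℓ i) ^ 3 := by
        simp only [Eloc, ha_def]; ring
      have e2 : 1 / (η * h' i) * Eloc ζ C τ (ℓ' i) = a * (ℓ' i) ^ 3 := by
        simp only [Eloc, ha_def]; ring
      rw [e1, e2, hωeq]
      exact cube_grad a (ℓ' i) (ℓ i) ha.le hℓ'nn hℓnn
    -- offloading part
    set b : ℝ := 1 / (η * h' i) * (τ * σ2 / g i) with hb_def
    have hb : 0 < b := by rw [hb_def]; positivity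
    have e3 : 1 / (η * h' i) * Eoff τ σ2 (g i) B (d i)
        = b * ((2:ℝ) ^ (d i / (τ * B)) - 1) := by
      simp only [Eoff, hb_def]; ring
    have e4 : 1 / (η * h' i) * Eoff τ σ2 (g i) B (d' i)
        = b * ((2:ℝ) ^ (d' i / (τ * B)) - 1) := by
      simp only [Eoff, hb_def]; ring
    have hB2 : b * ((2:ℝ) ^ (d i / (τ * B)) - 1) + ω * (d' i - d i)
        ≤ b * ((2:ℝ) ^ (d' i / (τ * B)) - 1) := by
      by_cases hc : 1 ≤ ω * (B * η * h' i * g i) / (σ2 * Real.log 2)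
      · -- interior case: the slope equals ω
        have hMpos : (0:ℝ) < ω * (B * η * h' i * g i) / (σ2 * Real.log 2) :=
          lt_of_lt_of_le one_pos hc
        have h2u : (2:ℝ) ^ (d i / (τ * B))
            = ω * (B * η * h' i * g i) / (σ2 * Real.log 2) := by
          rw [hdi, max_eq_left hc]
          have hq : τ * B * Real.logb 2 (ω * (B * η * h' i * g i) / (σ2 * Real.log 2)) / (τ * B)
              = Real.logb 2 (ω * (B * η * h' i * g i) / (σ2 * Real.log 2)) := by
            field_simp
          rw [hq, Real.rpow_logb two_pos (by norm_num) hMpos]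
        have hS : b * Real.log 2 * ((2:ℝ) ^ (d i / (τ * B))) / (τ * B) = ω := by
          rw [h2u, hb_def]
          field_simp
        have hkey := rpow_grad (d i / (τ * B)) (d' i / (τ * B))
        have hmul := mul_le_mul_of_nonneg_left hkey hb.le
        have heq2 : ω * (d' i - d i)
            = b * (Real.log 2 * (2:ℝ) ^ (d i / (τ * B)) * (d' i / (τ * B) - d i / (τ * B))) := by
          rw [← hS]
          field_simp
        rw [heq2]
        linarith [hmul]
      · -- boundary case: d i = 0
        have hlt : ω * (B * η * h' i * g i) / (σ2 * Real.log 2) < 1 := lt_of_not_ge hc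
        have hd0 : d i = 0 := by
          rw [hdi, max_eq_right hlt.le, Real.logb_one, mul_zero]
        have h2u1 : (2:ℝ) ^ (d i / (τ * B)) = 1 := by
          rw [hd0, zero_div, Real.rpow_zero]
        have h1 : ω * (B * η * h' i * g i) ≤ σ2 * Real.log 2 :=
          le_of_lt ((div_lt_one (by positivity)).mp hlt)
        have h2 : ω * (τ * B) ≤ b * Real.log 2 := by
          have e : b * Real.log 2 = τ * (σ2 * Real.log 2) / (η * h' i * g i) := by
            rw [hb_def]; field_simp
          rw [e, le_div_iff₀ (by positivity)]
          linarith [mul_le_mul_of_nonneg_left h1 hτ.le]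
        have hg2 := rpow_grad (0:ℝ) (d' i / (τ * B))
        simp only [Real.rpow_zero, mul_one, sub_zero] at hg2
        have hstep : b * (Real.log 2 * (d' i / (τ * B)))
            ≤ b * ((2:ℝ) ^ (d' i / (τ * B)) - 1) :=
          mul_le_mul_of_nonneg_left (by linarith) hb.le
        have hstep2 : ω * (d' i) ≤ b * Real.log 2 * (d' i / (τ * B)) := by
          have e5 : ω * d' i = ω * (τ * B) * (d' i / (τ * B)) := by
            field_simp
          rw [e5]
          exact mul_le_mul_of_nonneg_right h2 (by positivity)
        rw [h2u1, hd0]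
        linarith [hstep, hstep2]
    have hB : 1 / (η * h' i) * Eoff τ σ2 (g i) B (d i) + ω * (d' i - d i)
        ≤ 1 / (η * h' i) * Eoff τ σ2 (g i) B (d' i) := by
      rw [e3, e4]; exact hB2
    have hsplit : ω * ((ℓ' i + d' i) - (ℓ i + d i))
        = ω * (ℓ' i - ℓ i) + ω * (d' i - d i) := by ring
    rw [mul_add, mul_add, hsplit]
    linarith
  have hzero : ∑ i ∈ Finset.Icc 1 N, ω * ((ℓ' i + d' i) - (ℓ i + d i)) = 0 := by
    rw [← Finset.mul_sum, Finset.sum_sub_distrib, hsum, sub_self, mul_zero]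
  calc ∑ i ∈ Finset.Icc 1 N, 1 / (η * h' i) * (Eloc ζ C τ (ℓ i) + Eoff τ σ2 (g i) B (d i))
      = ∑ i ∈ Finset.Icc 1 N,
          (1 / (η * h' i) * (Eloc ζ C τ (ℓ i) + Eoff τ σ2 (g i) B (d i))
            + ω * ((ℓ' i + d' i) - (ℓ i + d i))) := by
        rw [Finset.sum_add_distrib, hzero, add_zero]
    _ ≤ ∑ i ∈ Finset.Icc 1 N,
          1 / (η * h' i) * (Eloc ζ C τ (ℓ' i) + Eoff τ σ2 (g i) B (d' i)) :=
        Finset.sum_le_sum key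
end
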